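/- arXiv:2208.02916 — 9 statements merged into one kernel-verified Lean document; each statement's English description precedes it below -/
import Mathlib

section
/- Let M be a pointed metric space and let f, g be real-valued Lipschitz functions on M vanishing at the base point, such that for all scalars a, b, the Lipschitz norm of a·f + b·g equals max(|a|,|b|) (i.e., the pair spans a subspace isometric to ℓ∞²). If f strongly attains its Lipschitz norm at a pair of distinct points x, y (that is, |f(x) - f(y)| = d(x,y)), then g(x) = g(y). -/
/-- `L` is the (least) Lipschitz norm of `f`. -/
def LipNormEq {M : Type*} [MetricSpace M] (f : M → ℝ) (L : ℝ) : Prop :=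
  (∀ p q : M, |f p - f q| ≤ L * dist p q) ∧
  ∀ L' : ℝ, 0 ≤ L' → (∀ p q : M, |f p - f q| ≤ L' * dist p q) → L ≤ L'

theorem stmt0 {M : Type*} [MetricSpace M] (z₀ : M) (f g : M → ℝ)
    (hf0 : f z₀ = 0) (hg0 : g z₀ = 0)
    (hiso : ∀ a b : ℝ, LipNormEq (fun z => a * f z + b * g z) (max |a| |b|))
    (x y : M) (hxy : x ≠ y) (hatt : |f x - f y| = dist x y) :
    g x = g y := by
  have h1 := (hiso 1 1).1 x y
  have h2 := (hiso 1 (-1)).1 x y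
  norm_num at h1 h2
  rw [abs_le] at h1 h2
  rcases abs_cases (f x - f y) with ⟨h, _⟩ | ⟨h, _⟩ <;>
    · rw [h] at hatt
      linarith [h1.1, h1.2, h2.1, h2.2]
end

section
/- Let M be a pointed metric space and let x₁, y₁, x₂, y₂ ∈ M with x₁ ≠ y₁, x₂ ≠ y₂, and d(x₁,x₂) ≥ d(x₁,y₁) + d(x₂,y₂). For i = 1,2 define fᵢ(z) = max(0, d(xᵢ,yᵢ) - d(z,xᵢ)). Then for all real λ₁, λ₂, the Lipschitz norm of λ₁f₁ + λ₂f₂ equals max(|λ₁|,|λ₂|). -/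
private lemma aux_lip {M : Type*} [MetricSpace M] (r : ℝ) (a z w : M) :
    |max 0 (r - dist z a) - max 0 (r - dist w a)| ≤ dist z w := by
  calc |max 0 (r - dist z a) - max 0 (r - dist w a)|
      = |max (r - dist z a) 0 - max (r - dist w a) 0| := by
        rw [max_comm 0, max_comm 0]
    _ ≤ |(r - dist z a) - (r - dist w a)| := abs_max_sub_max_le_abs _ _ _
    _ = |dist z a - dist w a| := by rw [abs_sub_comm]; ring_nf
    _ ≤ dist z w := abs_dist_sub_le z w a

theorem stmt4 {M : Type*} [MetricSpace M] (x₁ y₁ x₂ y₂ : M)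
    (h₁ : x₁ ≠ y₁) (h₂ : x₂ ≠ y₂)
    (hsep : dist x₁ y₁ + dist x₂ y₂ ≤ dist x₁ x₂) :
    ∀ l₁ l₂ : ℝ,
      LipNormEq
        (fun z => l₁ * max 0 (dist x₁ y₁ - dist z x₁) + l₂ * max 0 (dist x₂ y₂ - dist z x₂))
        (max |l₁| |l₂|) := by
  intro l₁ l₂
  set r₁ := dist x₁ y₁ with hr₁
  set r₂ := dist x₂ y₂ with hr₂
  have hr₁pos : 0 < r₁ := dist_pos.2 h₁
  have hr₂pos : 0 < r₂ := dist_pos.2 h₂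
  -- at each point at most one "bump" is positive
  have nonover : ∀ p : M, 0 < r₁ - dist p x₁ → r₂ - dist p x₂ ≤ 0 := by
    intro p hp
    by_contra hq
    push_neg at hq
    have := dist_triangle x₁ p x₂
    rw [dist_comm x₁ p] at this
    linarith
  have key : ∀ z w : M,
      |max 0 (r₁ - dist z x₁) - max 0 (r₁ - dist w x₁)|
      + |max 0 (r₂ - dist z x₂) - max 0 (r₂ - dist w x₂)| ≤ dist z w := by
    have main : ∀ z w : M, 0 < r₁ - dist z x₁ → 0 < r₂ - dist w x₂ →
        |max 0 (r₁ - dist z x₁) - max 0 (r₁ - dist w x₁)|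
        + |max 0 (r₂ - dist z x₂) - max 0 (r₂ - dist w x₂)| ≤ dist z w := by
      intro z w hz hw
      have hc : r₂ - dist z x₂ ≤ 0 := nonover z hz
      have hb : r₁ - dist w x₁ ≤ 0 := by
        by_contra hb
        push_neg at hb
        have := nonover w hb
        linarith
      rw [max_eq_left hb, max_eq_left hc, max_eq_right hz.le, max_eq_right hw.le, sub_zero, zero_sub,
        abs_neg, abs_of_pos hz, abs_of_pos hw]
      have h2 := dist_triangle z w x₂
      have h3 : dist x₁ x₂ ≤ dist z x₁ + dist z w + dist w x₂ := by
        have t1 := dist_triangle x₁ z x₂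
        have t2 := dist_triangle z w x₂
        rw [dist_comm x₁ z] at t1
        linarith
      linarith
    intro z w
    by_cases hzc : 0 < r₂ - dist z x₂
    · by_cases hwa : 0 < r₁ - dist w x₁
      · have := main w z hwa hzc
        rw [abs_sub_comm (max 0 (r₁ - dist w x₁)), abs_sub_comm (max 0 (r₂ - dist w x₂)),
          dist_comm w z] at this
        linarith
      · -- r₁ - dist w x₁ ≤ 0 and also r₁ - dist z x₁ ≤ 0 (since z bump-2 positive)
        push_neg at hwa
        have hza : r₁ - dist z x₁ ≤ 0 := by
          by_contra h
          push_neg at h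
          have := nonover z h
          linarith
        rw [max_eq_left hza, max_eq_left hwa, sub_zero, abs_zero, zero_add]
        exact aux_lip r₂ x₂ z w
    · push_neg at hzc
      by_cases hwc : 0 < r₂ - dist w x₂
      · by_cases hza : 0 < r₁ - dist z x₁
        · exact main z w hza hwc
        · push_neg at hza
          have hwa : r₁ - dist w x₁ ≤ 0 := by
            by_contra h
            push_neg at h
            have := nonover w h
            linarith
          rw [max_eq_left hza, max_eq_left hwa, sub_zero, abs_zero, zero_add]
          exact aux_lip r₂ x₂ z w
      · push_neg at hwc
        rw [max_eq_left hzc, max_eq_left hwc, sub_zero, abs_zero, add_zero]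
        exact aux_lip r₁ x₁ z w
  constructor
  · intro p q
    set a := max 0 (r₁ - dist p x₁)
    set b := max 0 (r₁ - dist q x₁)
    set c := max 0 (r₂ - dist p x₂)
    set d := max 0 (r₂ - dist q x₂)
    have hL : (0:ℝ) ≤ max |l₁| |l₂| := le_max_of_le_left (abs_nonneg _)
    calc |l₁ * a + l₂ * c - (l₁ * b + l₂ * d)|
        = |l₁ * (a - b) + l₂ * (c - d)| := by ring_nf
      _ ≤ |l₁ * (a - b)| + |l₂ * (c - d)| := abs_add_le _ _
      _ = |l₁| * |a - b| + |l₂| * |c - d| := by rw [abs_mul, abs_mul]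
      _ ≤ max |l₁| |l₂| * |a - b| + max |l₁| |l₂| * |c - d| := by
          gcongr
          · exact le_max_left _ _
          · exact le_max_right _ _
      _ = max |l₁| |l₂| * (|a - b| + |c - d|) := by ring
      _ ≤ max |l₁| |l₂| * dist p q := by
          have := key p q
          exact mul_le_mul_of_nonneg_left this hL
  · intro L' hL' hb
    have hl₁ : |l₁| ≤ L' := by
      have h := hb x₁ y₁
      have e1 : max 0 (r₁ - dist x₁ x₁) = r₁ := by
        rw [dist_self, sub_zero]; exact max_eq_right hr₁pos.le
      have e2 : max 0 (r₂ - dist x₁ x₂) = 0 := by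
        apply max_eq_left; linarith
      have e3 : max 0 (r₁ - dist y₁ x₁) = 0 := by
        apply max_eq_left; rw [dist_comm]; linarith
      have e4 : max 0 (r₂ - dist y₁ x₂) = 0 := by
        apply max_eq_left
        have := dist_triangle x₁ y₁ x₂
        linarith
      simp only [e1, e2, e3, e4, mul_zero, add_zero, zero_add, sub_zero] at h
      rw [abs_mul, abs_of_pos hr₁pos] at h
      have : |l₁| * r₁ ≤ L' * r₁ := h
      exact le_of_mul_le_mul_right (by linarith) hr₁pos
    have hl₂ : |l₂| ≤ L' := by
      have h := hb x₂ y₂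
      have e1 : max 0 (r₁ - dist x₂ x₁) = 0 := by
        apply max_eq_left; rw [dist_comm]; linarith
      have e2 : max 0 (r₂ - dist x₂ x₂) = r₂ := by
        rw [dist_self, sub_zero]; exact max_eq_right hr₂pos.le
      have e3 : max 0 (r₁ - dist y₂ x₁) = 0 := by
        apply max_eq_left
        have := dist_triangle x₁ x₂ y₂
        rw [dist_comm y₂ x₁]
        have : dist x₁ y₂ ≥ dist x₁ x₂ - dist x₂ y₂ := by
          have := dist_triangle x₁ y₂ x₂
          rw [dist_comm y₂ x₂] at this
          linarith
        linarith
      have e4 : max 0 (r₂ - dist y₂ x₂) = 0 := by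
        apply max_eq_left; rw [dist_comm]; linarith
      simp only [e1, e2, e3, e4, mul_zero, add_zero, zero_add, sub_zero] at h
      rw [abs_mul, abs_of_pos hr₂pos] at h
      have : |l₂| * r₂ ≤ L' * r₂ := h
      exact le_of_mul_le_mul_right (by linarith) hr₂pos
    exact max_le hl₁ hl₂
end

section
/- Let M be a pointed metric space, Γ a nonempty index set, and {x_γ}, {y_γ} families in M with x_γ ≠ y_γ for all γ, x_α ≠ x_β for α ≠ β, and d(x_α,x_β) ≥ d(x_α,y_α) + d(x_β,y_β) for all α ≠ β. Define f_γ(z) = max(0, d(x_γ,y_γ) - d(z,x_γ)). Then for every λ ∈ c₀(Γ), the function f = Σ_γ λ_γ (f_γ - f_γ(0)) belongs to Lip₀(M), has Lipschitz norm equal to ‖λ‖_∞, and strongly attains this norm at a pair (x_{γ₀}, y_{γ₀}) where |λ_{γ₀}| = ‖λ‖_∞ (when λ ≠ 0). In particular, the map λ ↦ f is a linear isometric embedding of c₀(Γ) into Lip₀(M) whose image is contained in SNA(M). -/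
theorem stmt5 {M : Type*} [MetricSpace M] (z₀ : M) {Γ : Type*} [Nonempty Γ]
    (x y : Γ → M) (hxy : ∀ γ, x γ ≠ y γ)
    (hx : ∀ α β : Γ, α ≠ β → x α ≠ x β)
    (hsep : ∀ α β : Γ, α ≠ β → dist (x α) (y α) + dist (x β) (y β) ≤ dist (x α) (x β))
    (lam : Γ → ℝ) (hc₀ : ∀ ε > (0 : ℝ), {γ : Γ | ε ≤ |lam γ|}.Finite) :
    (∑' γ, lam γ * (max 0 (dist (x γ) (y γ) - dist z₀ (x γ))
        - max 0 (dist (x γ) (y γ) - dist z₀ (x γ))) = 0) ∧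
    LipNormEq
      (fun z => ∑' γ, lam γ * (max 0 (dist (x γ) (y γ) - dist z (x γ))
        - max 0 (dist (x γ) (y γ) - dist z₀ (x γ))))
      (⨆ γ, |lam γ|) ∧
    (lam ≠ 0 → ∃ γ₀ : Γ, |lam γ₀| = (⨆ γ, |lam γ|) ∧
      |(∑' γ, lam γ * (max 0 (dist (x γ) (y γ) - dist (x γ₀) (x γ))
          - max 0 (dist (x γ) (y γ) - dist z₀ (x γ))))
        - (∑' γ, lam γ * (max 0 (dist (x γ) (y γ) - dist (y γ₀) (x γ))
          - max 0 (dist (x γ) (y γ) - dist z₀ (x γ))))|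
        = (⨆ γ, |lam γ|) * dist (x γ₀) (y γ₀)) := by
  classical
  -- abbreviations
  set r : Γ → ℝ := fun γ => dist (x γ) (y γ) with hrdef
  set φ : M → Γ → ℝ := fun z γ => max 0 (r γ - dist z (x γ)) with hφdef
  have hrpos : ∀ γ, 0 < r γ := fun γ => dist_pos.2 (hxy γ)
  have hφnn : ∀ z γ, 0 ≤ φ z γ := fun z γ => le_max_left _ _
  have hne0 : ∀ (z : M) (γ : Γ), φ z γ ≠ 0 → dist z (x γ) < r γ := by
    intro z γ h
    by_contra hc
    push_neg at hc
    exact h (max_eq_left (by linarith))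
  have hval : ∀ (z : M) (γ : Γ), dist z (x γ) < r γ → φ z γ = r γ - dist z (x γ) :=
    fun z γ h => max_eq_right (by linarith)
  -- disjointness of supports
  have hdisj : ∀ (z : M) (α β : Γ), α ≠ β → φ z α ≠ 0 → φ z β = 0 := by
    intro z α β hne hα
    by_contra hβ
    have h1 := hne0 z α hα
    have h2 := hne0 z β hβ
    have hs := hsep α β hne
    have t : dist (x α) (x β) ≤ dist (x α) z + dist z (x β) := dist_triangle _ _ _
    have c : dist (x α) z = dist z (x α) := dist_comm _ _
    linarith
  -- summability
  have hsumm : ∀ z : M, Summable (fun γ => lam γ * φ z γ) := by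
    intro z
    have hfin : {γ : Γ | φ z γ ≠ 0}.Finite := by
      apply Set.Subsingleton.finite
      intro a ha b hb
      by_contra hab
      exact hb (hdisj z a b hab ha)
    apply summable_of_ne_finset_zero (s := hfin.toFinset)
    intro b hb
    simp only [Set.Finite.mem_toFinset, Set.mem_setOf_eq, not_not] at hb
    rw [hb, mul_zero]
  set T : M → ℝ := fun z => ∑' γ, lam γ * φ z γ with hTdef
  have hT_eq : ∀ (z : M) (α : Γ), φ z α ≠ 0 → T z = lam α * φ z α := by
    intro z α hα
    exact tsum_eq_single α (fun β hβα => by rw [hdisj z α β (Ne.symm hβα) hα, mul_zero])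
  have hT_zero : ∀ z : M, (∀ γ, φ z γ = 0) → T z = 0 := by
    intro z h
    have h0 : (fun γ => lam γ * φ z γ) = fun _ => (0 : ℝ) := by
      funext γ; rw [h γ, mul_zero]
    calc T z = ∑' γ, lam γ * φ z γ := rfl
      _ = 0 := by rw [h0, tsum_zero]
  -- the sup
  have hbdd : BddAbove (Set.range fun γ => |lam γ|) := by
    refine ⟨1 + ∑ γ ∈ (hc₀ 1 one_pos).toFinset, |lam γ|, ?_⟩
    rintro v ⟨γ, rfl⟩
    by_cases h : 1 ≤ |lam γ|
    · have hγ : γ ∈ (hc₀ 1 one_pos).toFinset := by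
        simp only [Set.Finite.mem_toFinset, Set.mem_setOf_eq]; exact h
      have h2 := Finset.single_le_sum (f := fun γ => |lam γ|)
        (fun i _ => abs_nonneg _) hγ
      linarith
    · push_neg at h
      have h2 : (0:ℝ) ≤ ∑ γ ∈ (hc₀ 1 one_pos).toFinset, |lam γ| :=
        Finset.sum_nonneg fun i _ => abs_nonneg _
      linarith
  set s : ℝ := ⨆ γ, |lam γ| with hsdef
  have hle : ∀ γ, |lam γ| ≤ s := fun γ => le_ciSup hbdd γ
  have hs0 : 0 ≤ s := le_trans (abs_nonneg _) (hle (Classical.arbitrary Γ))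
  -- φ is 1-Lipschitz
  have hφlip : ∀ (p q : M) (γ : Γ), |φ p γ - φ q γ| ≤ dist p q := by
    intro p q γ
    have h1 : |φ p γ - φ q γ| ≤ |(r γ - dist p (x γ)) - (r γ - dist q (x γ))| := by
      rw [show φ p γ = max (r γ - dist p (x γ)) 0 from max_comm _ _,
        show φ q γ = max (r γ - dist q (x γ)) 0 from max_comm _ _]
      exact abs_max_sub_max_le_abs _ _ _
    have h2 : (r γ - dist p (x γ)) - (r γ - dist q (x γ)) = -(dist p (x γ) - dist q (x γ)) := by
      ring
    rw [h2, abs_neg] at h1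
    exact h1.trans (abs_dist_sub_le p q (x γ))
  -- key Lipschitz bound for T
  have hone : ∀ p q : M, (∀ γ, φ q γ = 0) → |T p - T q| ≤ s * dist p q := by
    intro p q hq
    rw [hT_zero q hq, sub_zero]
    by_cases hp : ∃ α, φ p α ≠ 0
    · obtain ⟨α, hα⟩ := hp
      rw [hT_eq p α hα, abs_mul]
      have hb : |φ p α| ≤ dist p q := by
        have := hφlip p q α
        rwa [hq α, sub_zero] at this
      exact mul_le_mul (hle α) hb (abs_nonneg _) hs0
    · push_neg at hp
      rw [hT_zero p hp, abs_zero]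
      exact mul_nonneg hs0 dist_nonneg
  have hkey : ∀ p q : M, |T p - T q| ≤ s * dist p q := by
    intro p q
    by_cases hq : ∃ β, φ q β ≠ 0
    · by_cases hp : ∃ α, φ p α ≠ 0
      · obtain ⟨α, hα⟩ := hp
        obtain ⟨β, hβ⟩ := hq
        by_cases hab : α = β
        · subst hab
          rw [hT_eq p α hα, hT_eq q α hβ, ← mul_sub, abs_mul]
          exact mul_le_mul (hle α) (hφlip p q α) (abs_nonneg _) hs0
        · rw [hT_eq p α hα, hT_eq q β hβ]
          have h1 := hne0 p α hα
          have h2 := hne0 q β hβ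
          have e1 := hval p α h1
          have e2 := hval q β h2
          have hgeo : φ p α + φ q β ≤ dist p q := by
            have hs' := hsep α β hab
            have tA : dist (x α) (x β) ≤ dist (x α) p + dist p (x β) := dist_triangle _ _ _
            have tB : dist p (x β) ≤ dist p q + dist q (x β) := dist_triangle _ _ _
            have c1 : dist (x α) p = dist p (x α) := dist_comm _ _
            rw [e1, e2]
            linarith
          calc |lam α * φ p α - lam β * φ q β|
              ≤ |lam α * φ p α| + |lam β * φ q β| := by
                rw [sub_eq_add_neg]
                exact (abs_add_le _ _).trans (by rw [abs_neg])
            _ = |lam α| * φ p α + |lam β| * φ q β := by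
                rw [abs_mul, abs_mul, abs_of_nonneg (hφnn p α), abs_of_nonneg (hφnn q β)]
            _ ≤ s * φ p α + s * φ q β := by
                exact add_le_add (mul_le_mul_of_nonneg_right (hle α) (hφnn p α))
                  (mul_le_mul_of_nonneg_right (hle β) (hφnn q β))
            _ = s * (φ p α + φ q β) := (mul_add _ _ _).symm
            _ ≤ s * dist p q := mul_le_mul_of_nonneg_left hgeo hs0
      · push_neg at hp
        rw [abs_sub_comm, dist_comm]
        exact hone q p hp
    · push_neg at hq
      exact hone p q hq
  -- values at the special points
  have hTx : ∀ γ, T (x γ) = lam γ * r γ := by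
    intro γ
    have hφx : φ (x γ) γ = r γ := by
      show max 0 (r γ - dist (x γ) (x γ)) = r γ
      rw [dist_self, sub_zero]
      exact max_eq_right (hrpos γ).le
    have hne : φ (x γ) γ ≠ 0 := by rw [hφx]; exact (hrpos γ).ne'
    rw [hT_eq _ γ hne, hφx]
  have hTy : ∀ γ, T (y γ) = 0 := by
    intro γ
    apply hT_zero
    intro β
    by_cases hb : β = γ
    · subst hb
      show max 0 (r β - dist (y β) (x β)) = 0
      rw [hrdef]
      rw [dist_comm (y β) (x β), sub_self, max_self]
    · apply max_eq_left
      have hs' := hsep β γ hb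
      have t : dist (x β) (x γ) ≤ dist (x β) (y γ) + dist (y γ) (x γ) := dist_triangle _ _ _
      have c1 : dist (y γ) (x γ) = dist (x γ) (y γ) := dist_comm _ _
      have c2 : dist (x β) (y γ) = dist (y γ) (x β) := dist_comm _ _
      have : (r γ : ℝ) = dist (x γ) (y γ) := rfl
      have : (r β : ℝ) = dist (x β) (y β) := rfl
      simp only [hrdef]
      linarith
  -- the difference formula
  have e : ∀ z : M, (∑' γ, lam γ * (max 0 (dist (x γ) (y γ) - dist z (x γ))
      - max 0 (dist (x γ) (y γ) - dist z₀ (x γ)))) = T z - T z₀ := by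
    intro z
    have step1 : (∑' γ, lam γ * (φ z γ - φ z₀ γ))
        = ∑' γ, (lam γ * φ z γ - lam γ * φ z₀ γ) :=
      tsum_congr fun γ => mul_sub _ _ _
    calc (∑' γ, lam γ * (φ z γ - φ z₀ γ))
        = ∑' γ, (lam γ * φ z γ - lam γ * φ z₀ γ) := step1
      _ = T z - T z₀ := Summable.tsum_sub (hsumm z) (hsumm z₀)
  refine ⟨by simp, ⟨?_, ?_⟩, ?_⟩
  · -- Lipschitz bound
    intro p q
    simp only []
    rw [e p, e q]
    have : (T p - T z₀) - (T q - T z₀) = T p - T q := by ring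
    rw [this]
    exact hkey p q
  · -- minimality
    intro L' hL'0 hL'
    apply ciSup_le
    intro γ
    have h := hL' (x γ) (y γ)
    simp only [] at h
    rw [e (x γ), e (y γ), hTx γ, hTy γ] at h
    have h2 : (lam γ * r γ - T z₀) - ((0:ℝ) - T z₀) = lam γ * r γ := by ring
    rw [h2, abs_mul, abs_of_pos (hrpos γ)] at h
    have hd : dist (x γ) (y γ) = r γ := rfl
    rw [hd] at h
    exact le_of_mul_le_mul_right h (hrpos γ)
  · -- strong attainment
    intro hlam
    have hex : ∃ γ, lam γ ≠ 0 := Function.ne_iff.1 hlam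
    obtain ⟨γ₁, hγ₁⟩ := hex
    have hspos : 0 < s := lt_of_lt_of_le (abs_pos.2 hγ₁) (hle γ₁)
    have hhalf : s / 2 < s := by linarith
    obtain ⟨γ₂, hγ₂⟩ := exists_lt_of_lt_ciSup hhalf
    have hAfin := hc₀ (s / 2) (by linarith)
    have hAne : (hAfin.toFinset).Nonempty := by
      refine ⟨γ₂, ?_⟩
      simp only [Set.Finite.mem_toFinset, Set.mem_setOf_eq]
      exact hγ₂.le
    obtain ⟨γ₀, hγ₀mem, hγ₀max⟩ := hAfin.toFinset.exists_max_image (fun γ => |lam γ|) hAne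
    have hγ₀half : s / 2 ≤ |lam γ₀| := by
      have := hγ₀mem
      simp only [Set.Finite.mem_toFinset, Set.mem_setOf_eq] at this
      exact this
    have hattain : |lam γ₀| = s := by
      refine le_antisymm (hle γ₀) (ciSup_le fun γ => ?_)
      by_cases hγ : γ ∈ hAfin.toFinset
      · exact hγ₀max γ hγ
      · simp only [Set.Finite.mem_toFinset, Set.mem_setOf_eq, not_le] at hγ
        linarith
    refine ⟨γ₀, hattain, ?_⟩
    rw [e (x γ₀), e (y γ₀), hTx γ₀, hTy γ₀]
    have h2 : (lam γ₀ * r γ₀ - T z₀) - ((0:ℝ) - T z₀) = lam γ₀ * r γ₀ := by ring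
    rw [h2, abs_mul, abs_of_pos (hrpos γ₀), hattain]
end

section
/- Let M = {p_n : n ≥ 1} with metric d(p_n,p_m) = 1 + 1/max(n,m) for n ≠ m. Then there does not exist a sequence (f_n) in Lip₀(M) of strongly norm-attaining functions that is isometrically equivalent to the canonical basis of c₀; that is, c₀ does not embed isometrically into SNA(M). -/
/-- The metric of Theorem 4.1: `d(pₙ,pₘ) = 1 + 1/max(n,m)` for `n ≠ m`. -/
noncomputable def dUD (n m : ℕ+) : ℝ :=
  if n = m then 0 else 1 + 1 / ((max n m : ℕ+) : ℝ)

/-- `L` is the (least) Lipschitz norm of `f` with respect to the distance `dUD`. -/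
def LipNormEqD (f : ℕ+ → ℝ) (L : ℝ) : Prop :=
  (∀ p q : ℕ+, |f p - f q| ≤ L * dUD p q) ∧
  ∀ L' : ℝ, 0 ≤ L' → (∀ p q : ℕ+, |f p - f q| ≤ L' * dUD p q) → L ≤ L'

/-!
Testing `±fᵢ ± fⱼ` shows `|fᵢ u - fᵢ v| + |fⱼ u - fⱼ v| ≤ d(u, v)` for `i ≠ j`. If `fᵢ` attains
its norm at `pᵢ < qᵢ`, then `fⱼ` must be constant on `{pᵢ, qᵢ}`, and the resulting crossing
inequalities between `d(pᵢ, qᵢ)`, `d(pⱼ, qⱼ)`, `d(pᵢ, pⱼ)`, ... are incompatible with the metric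
`1 + 1 / max` unless the points `pⱼ` are pairwise distinct and all lie below `q₀`. There are only
finitely many such points.
-/

lemma dUD_comm (x y : ℕ+) : dUD x y = dUD y x := by
  unfold dUD
  rcases eq_or_ne x y with rfl | h
  · rfl
  · rw [if_neg h, if_neg h.symm, max_comm]

lemma dUD_self (x : ℕ+) : dUD x x = 0 := by simp [dUD]

lemma dUD_of_lt {x y : ℕ+} (h : x < y) : dUD x y = 1 + 1 / (y : ℝ) := by
  rw [dUD, if_neg h.ne, max_eq_right h.le]

lemma one_lt_dUD {x y : ℕ+} (h : x ≠ y) : 1 < dUD x y := by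
  rw [dUD, if_neg h]
  have : (0 : ℝ) < ((max x y : ℕ+) : ℝ) := by positivity
  linarith [one_div_pos.mpr this]

lemma dUD_le_three_halves (x y : ℕ+) : dUD x y ≤ 3 / 2 := by
  wlog h : x < y generalizing x y
  · rcases (not_lt.mp h).lt_or_eq with h | rfl
    · rw [dUD_comm]; exact this y x h
    · rw [dUD_self]; norm_num
  have hy : (2 : ℝ) ≤ y := by
    have : (1 : ℕ+) < y := one_le.trans_lt h
    exact_mod_cast this
  rw [dUD_of_lt h]
  linarith [one_div_le_one_div_of_le two_pos hy]

lemma abs_add_abs_le_of_abs_add_sub_le {x y c : ℝ} (h₁ : |x + y| ≤ c) (h₂ : |x - y| ≤ c) :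
    |x| + |y| ≤ c := by
  rcases abs_cases x with ⟨hx, _⟩ | ⟨hx, _⟩ <;> rcases abs_cases y with ⟨hy, _⟩ | ⟨hy, _⟩ <;>
    rw [hx, hy] <;>
    linarith [le_abs_self (x + y), neg_abs_le (x + y), le_abs_self (x - y), neg_abs_le (x - y)]

/-- Attaining the joint bound forces `g p = g q` and `f r = f s`, so the triangle inequalities
through `r` and `s` give the crossing inequality. -/
lemma add_le_add_of_attain {α : Type*} (d : α → α → ℝ) {f g : α → ℝ}
    (hfg : ∀ u v, |f u - f v| + |g u - g v| ≤ d u v) {p q r s : α}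
    (hf : |f p - f q| = d p q) (hg : |g r - g s| = d r s) :
    d p q + d r s ≤ d p r + d q s := by
  have hf₁ := abs_sub_le (f p) (f r) (f q)
  have hf₂ := abs_sub_le (f r) (f s) (f q)
  have hg₁ := abs_sub_le (g r) (g p) (g s)
  have hg₂ := abs_sub_le (g p) (g q) (g s)
  rw [abs_sub_comm (f s)] at hf₂
  rw [abs_sub_comm (g r) (g p)] at hg₁
  linarith [hfg p r, hfg q s, hfg r s, hfg p q]

lemma ne_and_lt_of_dUD_crossing {p q r s : ℕ+} (hpq : p < q) (hrs : r < s)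
    (h₁ : dUD p q + dUD r s ≤ dUD p r + dUD q s)
    (h₂ : dUD p q + dUD r s ≤ dUD p s + dUD q r) : p ≠ r ∧ r < q := by
  have hpq' := one_lt_dUD hpq.ne
  have hrs' := one_lt_dUD hrs.ne
  refine ⟨?_, lt_of_not_ge fun hqr => ?_⟩
  · rintro rfl
    linarith [dUD_self p, dUD_le_three_halves q s]
  rcases hqr.lt_or_eq with hqr | rfl
  · rw [dUD_of_lt hpq, dUD_of_lt hrs, dUD_of_lt (hpq.trans hqr), dUD_of_lt (hqr.trans hrs)] at h₁
    have : (q : ℝ) < r := by exact_mod_cast hqr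
    linarith [one_div_lt_one_div_of_lt (by positivity) this]
  · linarith [dUD_self q, dUD_le_three_halves p s]

lemma iSup_abs_single_add_single {i j : ℕ} (hij : i ≠ j) {σ : ℝ} (hσ : |σ| = 1) :
    ⨆ n, |(Finsupp.single i 1 + Finsupp.single j σ : ℕ →₀ ℝ) n| = 1 := by
  have hle : ∀ n, |(Finsupp.single i 1 + Finsupp.single j σ : ℕ →₀ ℝ) n| ≤ 1 := by
    intro n
    simp only [Finsupp.add_apply, Finsupp.single_apply]
    split_ifs with hi hj <;> simp_all
  refine le_antisymm (ciSup_le hle) (le_ciSup_of_le ⟨1, Set.forall_mem_range.mpr hle⟩ i ?_)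
  simp [hij.symm]

lemma abs_sub_add_abs_sub_le_dUD {f : ℕ → ℕ+ → ℝ}
    (hf : ∀ lam : ℕ →₀ ℝ,
      LipNormEqD (fun z => lam.sum fun n a => a * f n z) (⨆ n, |lam n|))
    {i j : ℕ} (hij : i ≠ j) (u v : ℕ+) :
    |f i u - f i v| + |f j u - f j v| ≤ dUD u v := by
  have key : ∀ σ : ℝ, |σ| = 1 → |(f i u - f i v) + σ * (f j u - f j v)| ≤ dUD u v := by
    intro σ hσ
    have := (hf (Finsupp.single i 1 + Finsupp.single j σ)).1 u v
    rw [iSup_abs_single_add_single hij hσ, one_mul] at this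
    convert this using 2
    simp only [Finsupp.sum_add_index', Finsupp.sum_single_index, zero_mul, implies_true, add_mul,
      one_mul]
    ring
  refine abs_add_abs_le_of_abs_add_sub_le ?_ ?_
  · simpa using key 1 (by simp)
  · simpa [sub_eq_add_neg] using key (-1) (by simp)

lemma ne_and_lt_of_attain {f g : ℕ+ → ℝ}
    (hfg : ∀ u v, |f u - f v| + |g u - g v| ≤ dUD u v) {p q r s : ℕ+} (hpq : p < q) (hrs : r < s)
    (hf : |f p - f q| = dUD p q) (hg : |g r - g s| = dUD r s) : p ≠ r ∧ r < q := by
  refine ne_and_lt_of_dUD_crossing hpq hrs (add_le_add_of_attain dUD hfg hf hg) ?_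
  have hg' : |g s - g r| = dUD s r := by rwa [abs_sub_comm, dUD_comm]
  simpa only [dUD_comm s r] using add_le_add_of_attain dUD hfg hf hg'

lemma exists_lt_of_attain {f : ℕ+ → ℝ} (h : ∃ p q, p ≠ q ∧ |f p - f q| = dUD p q) :
    ∃ p q, p < q ∧ |f p - f q| = dUD p q := by
  obtain ⟨p, q, hne, h⟩ := h
  rcases hne.lt_or_gt with hlt | hgt
  · exact ⟨p, q, hlt, h⟩
  · exact ⟨q, p, hgt, by rwa [abs_sub_comm, dUD_comm]⟩

/-- There is no sequence of strongly norm-attaining Lipschitz functions on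
`(ℕ+, dUD)` (vanishing at the base point `p₁`) which is isometrically equivalent to the
canonical basis of `c₀`. -/
theorem stmt8 :
    ¬∃ f : ℕ → ℕ+ → ℝ,
      (∀ n, f n 1 = 0) ∧
      -- isometrically equivalent to the canonical basis of c₀
      (∀ lam : ℕ →₀ ℝ,
        LipNormEqD (fun z => lam.sum fun n a => a * f n z) (⨆ n, |lam n|)) ∧
      -- each `f n` (which then has Lipschitz norm 1) strongly attains its norm
      (∀ n, ∃ p q : ℕ+, p ≠ q ∧ |f n p - f n q| = dUD p q) := by
  rintro ⟨f, -, hc₀, hattain⟩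
  choose P Q hPQ hattainPQ using fun n => exists_lt_of_attain (hattain n)
  have hcross : ∀ i j, i ≠ j → P i ≠ P j ∧ P j < Q i := fun i j hij =>
    ne_and_lt_of_attain (abs_sub_add_abs_sub_le_dUD hc₀ hij) (hPQ i) (hPQ j)
      (hattainPQ i) (hattainPQ j)
  have hinj : Function.Injective P := fun i j h => by_contra fun hij => (hcross i j hij).1 h
  have hmem : ∀ n, P n ∈ Set.Iio (Q 0) := fun n => by
    rcases eq_or_ne n 0 with rfl | hn
    · exact hPQ 0
    · exact (hcross 0 n hn.symm).2
  exact Set.infinite_of_injective_forall_mem hinj hmem (Set.finite_Iio (Q 0))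
end

section
/- Let M be an infinite compact metric space. Then SNA(M) contains an isometric copy of c₀: there exists a linear isometric embedding of c₀ into Lip₀(M) whose range consists of strongly norm-attaining Lipschitz functions. -/
open Filter

lemma exists_acc (M : Type*) [MetricSpace M] [CompactSpace M] [Infinite M] :
    ∃ x : M, ∀ ε : ℝ, 0 < ε → ∃ z : M, z ≠ x ∧ dist z x < ε := by
  obtain u := Infinite.natEmbedding M
  obtain ⟨x, -, φ, hφ, hconv⟩ := isCompact_univ.tendsto_subseq (x := fun n => u n)
    (fun n => Set.mem_univ _)
  refine ⟨x, fun ε hε => ?_⟩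
  obtain ⟨N, hN⟩ := Metric.tendsto_atTop.mp hconv ε hε
  by_cases h : u (φ N) = x
  · refine ⟨u (φ (N + 1)), fun he => ?_, by simpa [dist_comm] using hN (N + 1) (by omega)⟩
    have : u (φ (N + 1)) = u (φ N) := by rw [he, h]
    have := u.injective this
    exact absurd (hφ.injective this) (by omega)
  · exact ⟨u (φ N), h, by simpa [dist_comm] using hN N le_rfl⟩

lemma key_lemma {M : Type*} [MetricSpace M] [CompactSpace M] [Infinite M] (z₀ : M) :
    ∃ (p q : ℕ → M) (a b : ℕ → ℝ),
      (∀ k, p k ≠ q k) ∧ (∀ k, 0 ≤ a k) ∧ (∀ k, 0 ≤ b k) ∧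
      (∀ k, a k + b k = dist (p k) (q k)) ∧
      (∀ j k, j ≠ k →
        (a j + a k ≤ dist (p j) (p k)) ∧ (a j + b k ≤ dist (p j) (q k)) ∧
        (b j + a k ≤ dist (q j) (p k)) ∧ (b j + b k ≤ dist (q j) (q k))) ∧
      (∀ k, a k ≤ dist z₀ (p k)) ∧ (∀ k, b k ≤ dist z₀ (q k)) := by
  obtain ⟨x, hx⟩ := exists_acc M
  obtain ⟨t₀, ht₀, hz₀⟩ : ∃ t₀ : ℝ, 0 < t₀ ∧
      ∀ (c : M) (ρ : ℝ), dist c x ≤ t₀ → ρ ≤ dist c x → ρ ≤ dist z₀ c := by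
    by_cases h : z₀ = x
    · exact ⟨1, one_pos, fun c ρ _ hρ => by rw [h, dist_comm]; exact hρ⟩
    · have hD : 0 < dist z₀ x := dist_pos.2 h
      refine ⟨dist z₀ x / 4, by linarith, fun c ρ h1 h2 => ?_⟩
      have := dist_triangle z₀ c x
      have : dist z₀ x - dist c x ≤ dist z₀ c := by
        have h3 := dist_triangle z₀ c x
        rw [dist_comm c x] at h3
        linarith [dist_comm x c ▸ h3]
      linarith
  by_cases hstar : ∃ t, 0 < t ∧ t ≤ t₀ ∧ ∀ u v : M, dist u x ≤ t → dist v x ≤ t → u ≠ v →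
      dist u v = dist u x + dist v x
  · -- star case
    obtain ⟨t, ht, htt₀, hs⟩ := hstar
    have step : ∀ w : M, 0 < dist w x → ∃ w' : M, 0 < dist w' x ∧ dist w' x < dist w x :=
      fun w hw => by
        obtain ⟨z, hz1, hz2⟩ := hx (dist w x) hw
        exact ⟨z, dist_pos.2 hz1, hz2⟩
    choose F hF1 hF2 using step
    obtain ⟨w0, hw01, hw02⟩ := hx t ht
    have hw0 : 0 < dist w0 x := dist_pos.2 hw01
    let Z : ℕ → {w : M // 0 < dist w x} := fun n =>
      Nat.rec ⟨w0, hw0⟩ (fun _ prev => ⟨F prev.1 prev.2, hF1 prev.1 prev.2⟩) n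
    let W : ℕ → M := fun n => (Z n).1
    have hZsucc : ∀ n, dist (W (n + 1)) x < dist (W n) x := by
      intro n
      exact hF2 (Z n).1 (Z n).2
    have hZanti : StrictAnti fun n => dist (W n) x := strictAnti_nat_of_succ_lt hZsucc
    have hZt : ∀ n, dist (W n) x < t := by
      intro n
      calc dist (W n) x ≤ dist (W 0) x := hZanti.antitone (Nat.zero_le n)
        _ < t := hw02
    have hZne : ∀ m n : ℕ, m ≠ n → dist (W m) (W n) =
        dist (W m) x + dist (W n) x := by
      intro m n hmn
      refine hs _ _ (hZt m).le (hZt n).le (fun he => hmn ?_)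
      have : dist (W m) x = dist (W n) x := by rw [he]
      exact hZanti.injective this
    refine ⟨fun k => W (2 * k), fun k => W (2 * k + 1),
      fun k => dist (W (2 * k)) x, fun k => dist (W (2 * k + 1)) x,
      ?_, fun k => dist_nonneg, fun k => dist_nonneg, ?_, ?_, ?_, ?_⟩
    · intro k he
      have h2 : dist (W (2 * k)) x = dist (W (2 * k + 1)) x := by
        rw [show W (2 * k) = W (2 * k + 1) from he]
      have h3 : 2 * k = 2 * k + 1 := hZanti.injective h2
      omega
    · intro k
      dsimp only
      exact (hZne (2 * k) (2 * k + 1) (by omega)).symm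
    · intro j k hjk
      dsimp only
      exact ⟨(hZne (2 * j) (2 * k) (by omega)).ge,
        (hZne (2 * j) (2 * k + 1) (by omega)).ge,
        (hZne (2 * j + 1) (2 * k) (by omega)).ge,
        (hZne (2 * j + 1) (2 * k + 1) (by omega)).ge⟩
    · intro k
      dsimp only
      exact hz₀ (W (2 * k)) _ (le_trans (hZt (2 * k)).le htt₀) le_rfl
    · intro k
      dsimp only
      exact hz₀ (W (2 * k + 1)) _ (le_trans (hZt (2 * k + 1)).le htt₀) le_rfl
  · -- non-star case
    push_neg at hstar
    have hsel : ∀ t : ℝ, ∃ pq : M × M, 0 < t → t ≤ t₀ →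
        dist pq.1 x ≤ t ∧ dist pq.2 x ≤ t ∧ pq.1 ≠ pq.2 ∧
        dist pq.1 pq.2 < dist pq.1 x + dist pq.2 x := by
      intro t
      by_cases h : 0 < t ∧ t ≤ t₀
      · obtain ⟨u, v, hu, hv, huv, hne⟩ := hstar t h.1 h.2
        refine ⟨(u, v), fun _ _ => ⟨hu, hv, huv, lt_of_le_of_ne ?_ hne⟩⟩
        calc dist u v ≤ dist u x + dist x v := dist_triangle u x v
          _ = dist u x + dist v x := by rw [dist_comm x v]
      · exact ⟨(x, x), fun h1 h2 => absurd ⟨h1, h2⟩ h⟩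
    choose PQ hPQ using hsel
    set G : ℝ → ℝ := fun t =>
      (dist (PQ t).1 x + dist (PQ t).2 x - dist (PQ t).1 (PQ t).2) / 2 with hG
    let T : ℕ → ℝ := fun n => Nat.rec t₀ (fun _ s => min s (G s) / 2) n
    have hT0 : T 0 = t₀ := rfl
    have hTs : ∀ n, T (n + 1) = min (T n) (G (T n)) / 2 := fun n => rfl
    have hTpos : ∀ n, 0 < T n ∧ T n ≤ t₀ := by
      intro n
      induction n with
      | zero => exact ⟨ht₀, le_rfl⟩
      | succ n ih =>
        obtain ⟨h1, h2⟩ := ih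
        obtain ⟨-, -, -, hlt⟩ := hPQ (T n) h1 h2
        have hGpos : 0 < G (T n) := by rw [hG]; dsimp only; linarith
        constructor
        · rw [hTs]; positivity
        · rw [hTs]
          calc min (T n) (G (T n)) / 2 ≤ T n / 2 := by
                have := min_le_left (T n) (G (T n)); linarith
            _ ≤ t₀ := by linarith
    have hTdec : ∀ n, T (n + 1) ≤ T n := by
      intro n
      rw [hTs]
      have := min_le_left (T n) (G (T n))
      have := (hTpos n).1
      linarith
    have hTanti : Antitone T := antitone_nat_of_succ_le hTdec
    have hTG : ∀ n, T (n + 1) ≤ G (T n) / 2 := by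
      intro n
      rw [hTs]
      have := min_le_right (T n) (G (T n))
      linarith
    set p : ℕ → M := fun k => (PQ (T k)).1 with hp
    set q : ℕ → M := fun k => (PQ (T k)).2 with hq
    set a : ℕ → ℝ := fun k =>
      (dist (p k) (q k) + dist (p k) x - dist (q k) x) / 2 with ha
    set b : ℕ → ℝ := fun k =>
      (dist (p k) (q k) + dist (q k) x - dist (p k) x) / 2 with hb
    have hk : ∀ k, dist (p k) x ≤ T k ∧ dist (q k) x ≤ T k ∧ p k ≠ q k ∧
        dist (p k) (q k) < dist (p k) x + dist (q k) x :=
      fun k => hPQ (T k) (hTpos k).1 (hTpos k).2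
    have ha0 : ∀ k, 0 ≤ a k := by
      intro k
      have h1 := dist_triangle (q k) (p k) x
      rw [dist_comm (q k) (p k)] at h1
      rw [ha]; dsimp only; linarith
    have hb0 : ∀ k, 0 ≤ b k := by
      intro k
      have h1 := dist_triangle (p k) (q k) x
      rw [hb]; dsimp only; linarith
    have hGTk : ∀ k, G (T k) = (dist (p k) x + dist (q k) x - dist (p k) (q k)) / 2 :=
      fun _ => rfl
    have hak : ∀ k, a k = (dist (p k) (q k) + dist (p k) x - dist (q k) x) / 2 :=
      fun _ => rfl
    have hbk : ∀ k, b k = (dist (p k) (q k) + dist (q k) x - dist (p k) x) / 2 :=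
      fun _ => rfl
    have hGk : ∀ k, dist (p k) x = a k + G (T k) ∧ dist (q k) x = b k + G (T k) := by
      intro k
      constructor
      · rw [hak k, hGTk k]; ring
      · rw [hbk k, hGTk k]; ring
    have haT : ∀ k, a k ≤ dist (p k) x := by
      intro k
      have h1 := (hk k).2.2.2
      rw [ha]; dsimp only; linarith
    have hbT : ∀ k, b k ≤ dist (q k) x := by
      intro k
      have h1 := (hk k).2.2.2
      rw [hb]; dsimp only; linarith
    have aux : ∀ j k, j < k → ∀ (c : M) (ρ : ℝ), dist c x = ρ + G (T j) →
        ∀ (c' : M) (ρ' : ℝ), dist c' x ≤ T k → ρ' ≤ dist c' x → ρ + ρ' ≤ dist c c' := by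
      intro j k hjk c ρ hc c' ρ' hc' hρ'
      have h1 : T k ≤ T (j + 1) := hTanti (Nat.succ_le_of_lt hjk)
      have h2 : T (j + 1) ≤ G (T j) / 2 := hTG j
      have h3 := dist_triangle c c' x
      have h4 : dist c' x ≤ G (T j) / 2 := by linarith
      linarith
    have cross : ∀ j k, j < k →
        (a j + a k ≤ dist (p j) (p k)) ∧ (a j + b k ≤ dist (p j) (q k)) ∧
        (b j + a k ≤ dist (q j) (p k)) ∧ (b j + b k ≤ dist (q j) (q k)) := by
      intro j k hjk
      obtain ⟨hpj, hqj⟩ := hGk j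
      exact ⟨aux j k hjk _ _ hpj _ _ (hk k).1 (haT k),
        aux j k hjk _ _ hpj _ _ (hk k).2.1 (hbT k),
        aux j k hjk _ _ hqj _ _ (hk k).1 (haT k),
        aux j k hjk _ _ hqj _ _ (hk k).2.1 (hbT k)⟩
    refine ⟨p, q, a, b, fun k => (hk k).2.2.1, ha0, hb0, ?_, ?_, ?_, ?_⟩
    · intro k; rw [ha, hb]; dsimp only; ring
    · intro j k hjk
      rcases lt_or_gt_of_ne hjk with h | h
      · exact cross j k h
      · obtain ⟨h1, h2, h3, h4⟩ := cross k j h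
        rw [dist_comm (p k) (p j)] at h1
        rw [dist_comm (p k) (q j)] at h2
        rw [dist_comm (q k) (p j)] at h3
        rw [dist_comm (q k) (q j)] at h4
        exact ⟨by linarith, by linarith, by linarith, by linarith⟩
    · exact fun k => hz₀ _ _ (le_trans (hk k).1 (hTpos k).2) (haT k)
    · exact fun k => hz₀ _ _ (le_trans (hk k).2.1 (hTpos k).2) (hbT k)

/-- If `M` is an infinite compact metric space, then `SNA(M)` contains an isometric copy
of `c₀`. -/
theorem stmt10 {M : Type*} [MetricSpace M] [CompactSpace M] [Infinite M] (z₀ : M) :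
    ∃ f : ℕ → M → ℝ,
      (∀ k, f k z₀ = 0) ∧
      ∀ lam : ℕ → ℝ, Tendsto lam atTop (nhds 0) →
        LipNormEq (fun z => ∑' k, lam k * f k z) (⨆ k, |lam k|) ∧
        (lam ≠ 0 → ∃ p q : M, p ≠ q ∧
          |(∑' k, lam k * f k p) - (∑' k, lam k * f k q)| = (⨆ k, |lam k|) * dist p q) := by
  obtain ⟨p, q, a, b, hpq, ha0, hb0, hab, hsep, hza, hzb⟩ := key_lemma z₀
  set f : ℕ → M → ℝ :=
    fun k z => max (a k - dist z (p k)) (min 0 (dist z (q k) - b k)) with hfdef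
  have hfk : ∀ k z, f k z = max (a k - dist z (p k)) (min 0 (dist z (q k) - b k)) :=
    fun k z => rfl
  -- u ≤ v
  have huv : ∀ k z, a k - dist z (p k) ≤ dist z (q k) - b k := by
    intro k z
    have h1 := dist_triangle (p k) z (q k)
    have h2 := hab k
    rw [dist_comm (p k) z] at h1
    linarith
  -- vanishing
  have hvanish : ∀ k z, a k ≤ dist z (p k) → b k ≤ dist z (q k) → f k z = 0 := by
    intro k z h1 h2
    rw [hfk]
    have hm : min 0 (dist z (q k) - b k) = 0 := min_eq_left (by linarith)
    rw [hm]
    exact max_eq_right (by linarith)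
  -- values at p k, q k
  have hfp : ∀ k, f k (p k) = a k := by
    intro k
    rw [hfk, dist_self]
    have h1 : dist (p k) (q k) - b k = a k := by have := hab k; linarith
    rw [h1, sub_zero]
    rw [min_eq_left (ha0 k)]
    exact max_eq_left (ha0 k)
  have hfq : ∀ k, f k (q k) = -(b k) := by
    intro k
    rw [hfk, dist_self]
    have h1 : a k - dist (q k) (p k) = -(b k) := by
      have := hab k; rw [dist_comm]; linarith
    rw [h1, zero_sub]
    rw [min_eq_right (by linarith [hb0 k])]
    exact max_self _
  -- 1-Lipschitz
  have hlip : ∀ k z w, |f k z - f k w| ≤ dist z w := by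
    intro k z w
    rw [hfk, hfk]
    refine le_trans (abs_max_sub_max_le_max _ _ _ _) (max_le ?_ ?_)
    · have : a k - dist z (p k) - (a k - dist w (p k)) = dist w (p k) - dist z (p k) := by
        ring
      rw [this, abs_sub_comm]
      exact abs_dist_sub_le z w (p k)
    · refine le_trans (abs_min_sub_min_le_max _ _ _ _) (max_le ?_ ?_)
      · simp [dist_nonneg]
      · have : dist z (q k) - b k - (dist w (q k) - b k) = dist z (q k) - dist w (q k) := by
          ring
        rw [this]
        exact abs_dist_sub_le z w (q k)
  -- shape of nonzero values
  have hshape : ∀ k z, f k z ≠ 0 →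
      (|f k z| = a k - dist z (p k)) ∨ (|f k z| = b k - dist z (q k)) := by
    intro k z hne
    rcases lt_trichotomy (f k z) 0 with hlt | heq | hgt
    · right
      have hv0 : dist z (q k) - b k < 0 := by
        by_contra h
        push_neg at h
        have hm : min 0 (dist z (q k) - b k) = 0 := min_eq_left h
        have h2 : 0 ≤ f k z := by
          rw [hfk, hm]
          exact le_max_right _ _
        linarith
      have hv : f k z = dist z (q k) - b k := by
        rw [hfk, min_eq_right hv0.le, max_eq_right (huv k z)]
      rw [abs_of_neg hlt, hv]
      ring
    · exact absurd heq hne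
    · left
      have hv : f k z = a k - dist z (p k) := by
        rcases max_choice (a k - dist z (p k)) (min 0 (dist z (q k) - b k)) with hc | hc
        · rw [hfk, hc]
        · exfalso
          have h2 : f k z ≤ 0 := by
            rw [hfk, hc]
            exact min_le_left _ _
          linarith
      rw [abs_of_pos hgt, hv]
  -- balls: nonzero value gives strict ball membership bound
  have hball : ∀ k z, f k z ≠ 0 →
      (|f k z| = a k - dist z (p k) ∧ 0 < a k - dist z (p k)) ∨
      (|f k z| = b k - dist z (q k) ∧ 0 < b k - dist z (q k)) := by
    intro k z hne
    have habs : 0 < |f k z| := abs_pos.2 hne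
    rcases hshape k z hne with h | h
    · exact Or.inl ⟨h, h ▸ habs⟩
    · exact Or.inr ⟨h, h ▸ habs⟩
  -- cross estimate
  have hcross : ∀ j k z w, j ≠ k → f j z ≠ 0 → f k w ≠ 0 →
      |f j z| + |f k w| ≤ dist z w := by
    intro j k z w hjk hz hw
    obtain ⟨h1, h2, h3, h4⟩ := hsep j k hjk
    rcases hball j z hz with ⟨hz1, hz2⟩ | ⟨hz1, hz2⟩ <;>
      rcases hball k w hw with ⟨hw1, hw2⟩ | ⟨hw1, hw2⟩
    · have ht := dist_triangle4 (p j) z w (p k)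
      rw [dist_comm (p j) z] at ht
      rw [hz1, hw1]; linarith
    · have ht := dist_triangle4 (p j) z w (q k)
      rw [dist_comm (p j) z] at ht
      rw [hz1, hw1]; linarith
    · have ht := dist_triangle4 (q j) z w (p k)
      rw [dist_comm (q j) z] at ht
      rw [hz1, hw1]; linarith
    · have ht := dist_triangle4 (q j) z w (q k)
      rw [dist_comm (q j) z] at ht
      rw [hz1, hw1]; linarith
  -- at most one nonzero
  have hsupp : ∀ z : M, ∃ j, ∀ k, k ≠ j → f k z = 0 := by
    intro z
    by_cases hE : ∃ j, f j z ≠ 0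
    · obtain ⟨j, hj⟩ := hE
      refine ⟨j, fun k hk => ?_⟩
      by_contra hkne
      have := hcross k j z z (hk) hkne hj
      rw [dist_self] at this
      have := abs_nonneg (f k z)
      have := abs_pos.2 hj
      linarith [abs_pos.2 hkne]
    · push_neg at hE
      exact ⟨0, fun k _ => hE k⟩
  have hgrep : ∀ (lam : ℕ → ℝ) (z : M) (j : ℕ), (∀ k, k ≠ j → f k z = 0) →
      ∑' k, lam k * f k z = lam j * f j z :=
    fun lam z j h => tsum_eq_single j (fun k hk => by rw [h k hk, mul_zero])
  -- other functions vanish at p j, q j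
  have hvpj : ∀ j k, k ≠ j → f k (p j) = 0 := by
    intro j k hk
    obtain ⟨h1, h2, h3, h4⟩ := hsep j k (Ne.symm hk)
    refine hvanish k (p j) ?_ ?_
    · rw [dist_comm]; rw [dist_comm] at h1; linarith [ha0 j]
    · linarith [ha0 j]
  have hvqj : ∀ j k, k ≠ j → f k (q j) = 0 := by
    intro j k hk
    obtain ⟨h1, h2, h3, h4⟩ := hsep j k (Ne.symm hk)
    refine hvanish k (q j) ?_ ?_
    · rw [dist_comm]; rw [dist_comm] at h3; linarith [hb0 j]
    · linarith [hb0 j]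
  refine ⟨f, fun k => hvanish k z₀ (hza k) (hzb k), ?_⟩
  intro lam hlam
  have hbdd : BddAbove (Set.range fun k => |lam k|) := by
    have h1 : Tendsto (fun k => |lam k|) atTop (nhds 0) := by
      have := hlam.abs
      rwa [abs_zero] at this
    exact h1.bddAbove_range
  have hleS : ∀ k, |lam k| ≤ ⨆ k, |lam k| := fun k => le_ciSup hbdd k
  have hS0 : 0 ≤ ⨆ k, |lam k| := le_trans (abs_nonneg _) (hleS 0)
  -- value of g at p j and q j
  have hgp : ∀ j, ∑' k, lam k * f k (p j) = lam j * a j := by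
    intro j
    rw [hgrep lam (p j) j (fun k hk => hvpj j k hk), hfp]
  have hgq : ∀ j, ∑' k, lam k * f k (q j) = -(lam j * b j) := by
    intro j
    rw [hgrep lam (q j) j (fun k hk => hvqj j k hk), hfq]
    ring
  have hattain : ∀ j, |(∑' k, lam k * f k (p j)) - ∑' k, lam k * f k (q j)| =
      |lam j| * dist (p j) (q j) := by
    intro j
    rw [hgp j, hgq j]
    have h1 : lam j * a j - -(lam j * b j) = lam j * (a j + b j) := by ring
    rw [h1, hab j, abs_mul, abs_of_nonneg (dist_nonneg : (0:ℝ) ≤ dist (p j) (q j))]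
  -- main Lipschitz bound
  have hmain : ∀ (S : ℝ), 0 ≤ S → (∀ k, |lam k| ≤ S) → ∀ z w : M,
      |(∑' k, lam k * f k z) - ∑' k, lam k * f k w| ≤ S * dist z w := by
    intro S hSnn hSle z w
    obtain ⟨j, hj⟩ := hsupp z
    obtain ⟨k, hk⟩ := hsupp w
    rw [hgrep lam z j hj, hgrep lam w k hk]
    by_cases hjz : f j z = 0
    · by_cases hkw : f k w = 0
      · rw [hjz, hkw, mul_zero, mul_zero, sub_zero, abs_zero]
        exact mul_nonneg hSnn dist_nonneg
      · have hfkz : f k z = 0 := by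
          by_cases h : k = j
          · rw [h]; exact hjz
          · exact hj k h
        have heq : lam j * f j z - lam k * f k w = lam k * (f k z - f k w) := by
          rw [hjz, hfkz]; ring
        rw [heq, abs_mul]
        exact mul_le_mul (hSle k) (hlip k z w) (abs_nonneg _) hSnn
    · by_cases hkw : f k w = 0
      · have hfjw : f j w = 0 := by
          by_cases h : j = k
          · rw [h]; exact hkw
          · exact hk j h
        have heq : lam j * f j z - lam k * f k w = lam j * (f j z - f j w) := by
          rw [hkw, hfjw]; ring
        rw [heq, abs_mul]
        exact mul_le_mul (hSle j) (hlip j z w) (abs_nonneg _) hSnn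
      · by_cases hjk : j = k
        · subst hjk
          have heq : lam j * f j z - lam j * f j w = lam j * (f j z - f j w) := by ring
          rw [heq, abs_mul]
          exact mul_le_mul (hSle j) (hlip j z w) (abs_nonneg _) hSnn
        · have h1 : |lam j * f j z - lam k * f k w| ≤ |lam j| * |f j z| + |lam k| * |f k w| := by
            calc |lam j * f j z - lam k * f k w| ≤ |lam j * f j z| + |lam k * f k w| :=
                  abs_sub _ _
              _ = |lam j| * |f j z| + |lam k| * |f k w| := by rw [abs_mul, abs_mul]
          have h2 := hcross j k z w hjk hjz hkw
          have h3 : |lam j| * |f j z| + |lam k| * |f k w| ≤ S * (|f j z| + |f k w|) := by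
            have := mul_le_mul_of_nonneg_right (hSle j) (abs_nonneg (f j z))
            have := mul_le_mul_of_nonneg_right (hSle k) (abs_nonneg (f k w))
            linarith
          have h4 : S * (|f j z| + |f k w|) ≤ S * dist z w :=
            mul_le_mul_of_nonneg_left h2 hSnn
          linarith
  constructor
  · constructor
    · exact hmain _ hS0 hleS
    · intro L' hL' hbound
      refine ciSup_le fun k => ?_
      have h1 := hbound (p k) (q k)
      rw [hattain k] at h1
      have hd : 0 < dist (p k) (q k) := dist_pos.2 (hpq k)
      exact le_of_mul_le_mul_right h1 hd
  · intro hne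
    obtain ⟨j₀, hj₀⟩ : ∃ j₀, lam j₀ ≠ 0 := Function.ne_iff.mp hne
    have hpos : 0 < |lam j₀| := abs_pos.2 hj₀
    have hev : ∀ᶠ k in atTop, |lam k| < |lam j₀| := by
      have h1 : Tendsto (fun k => |lam k|) atTop (nhds 0) := by
        have := hlam.abs; rwa [abs_zero] at this
      exact h1.eventually_lt_const hpos
    obtain ⟨N, hN⟩ := eventually_atTop.mp hev
    have hj₀N : j₀ < N := by
      by_contra h
      exact lt_irrefl _ (hN j₀ (le_of_not_gt h))
    obtain ⟨j, hjmem, hjmax⟩ := Finset.exists_max_image (Finset.range N)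
      (fun k => |lam k|) ⟨j₀, Finset.mem_range.2 hj₀N⟩
    have hSj : (⨆ k, |lam k|) = |lam j| := by
      refine le_antisymm (ciSup_le fun k => ?_) (hleS j)
      by_cases hkN : k < N
      · exact hjmax k (Finset.mem_range.2 hkN)
      · exact le_of_lt (lt_of_lt_of_le (hN k (le_of_not_gt hkN))
          (hjmax j₀ (Finset.mem_range.2 hj₀N)))
    exact ⟨p j, q j, hpq j, by rw [hattain j, hSj]⟩
end

section
/- Let (ε_k) be a strictly increasing sequence of positive reals with ε_k < 1/2, and let M = {p_k : k ≥ 0} with metric d(p_k,p_j) = k + j − ε_{max(k,j)} (k ≠ j ≥ 1), d(p_k,p_0) = k. Then M is a proper metric space (every closed bounded subset is compact; indeed every bounded subset is finite), is uniformly discrete, and every point of M attains its separation radius. -/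
/-- The metric of Theorem 4.5: `d(p_k,p_j) = k + j - ε_{max(k,j)}` for distinct
`k, j ≥ 1`, and `d(p_k,p_0) = k`. -/
noncomputable def dProper (ε : ℕ → ℝ) (k j : ℕ) : ℝ :=
  if k = j then 0
  else if k = 0 then (j : ℝ)
  else if j = 0 then (k : ℝ)
  else (k : ℝ) + (j : ℝ) - ε (max k j)

/-- The space of Theorem 4.5 is proper (every bounded subset is finite), uniformly
discrete, and every point attains its separation radius. -/
theorem stmt12 (ε : ℕ → ℝ) (hmono : StrictMono ε)
    (hpos : ∀ k, 0 < ε k) (hlt : ∀ k, ε k < 1 / 2) :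
    -- proper: every bounded subset is finite (hence closed bounded sets are compact)
    (∀ s : Set ℕ, ∀ B : ℝ, (∀ x ∈ s, ∀ y ∈ s, dProper ε x y ≤ B) → s.Finite) ∧
    -- uniformly discrete
    (∃ r > (0 : ℝ), ∀ k j : ℕ, k ≠ j → r ≤ dProper ε k j) ∧
    -- every point attains its separation radius
    (∀ k : ℕ, ∃ j : ℕ, j ≠ k ∧ ∀ m : ℕ, m ≠ k → dProper ε k j ≤ dProper ε k m) := by
  refine ⟨?_, ?_, ?_⟩
  · -- properness
    intro s B hB
    rcases s.eq_empty_or_nonempty with rfl | ⟨y0, hy0⟩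
    · exact Set.finite_empty
    · apply Set.Finite.subset (Set.finite_Iic (max y0 ⌈B + 1⌉₊))
      intro x hx
      simp only [Set.mem_Iic]
      rcases eq_or_ne x y0 with rfl | hne
      · exact le_max_left _ _
      · have hd := hB x hx y0 hy0
        have hx1 : (x : ℝ) ≤ B + 1 := by
          unfold dProper at hd
          rw [if_neg hne] at hd
          split_ifs at hd with h0 h1
          · -- x = 0, d = y0 ≥ 1 ≤ B
            have hy0ne : y0 ≠ 0 := by rintro rfl; exact hne (h0 ▸ rfl)
            have : (1 : ℝ) ≤ (y0 : ℝ) := by exact_mod_cast Nat.one_le_iff_ne_zero.2 hy0ne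
            subst h0
            push_cast
            linarith
          · linarith
          · have hy0ne : y0 ≠ 0 := h1
            have h1' : (1 : ℝ) ≤ (y0 : ℝ) := by exact_mod_cast Nat.one_le_iff_ne_zero.2 hy0ne
            have := hlt (max x y0)
            linarith
        have hxc : x ≤ ⌈B + 1⌉₊ := by
          have := hx1.trans (Nat.le_ceil (B + 1))
          exact_mod_cast this
        exact le_trans hxc (le_max_right _ _)
  · -- uniform discreteness
    refine ⟨1 / 2, by norm_num, ?_⟩
    intro k j hne
    unfold dProper
    rw [if_neg hne]
    split_ifs with h0 h1
    · have : j ≠ 0 := by rintro rfl; exact hne (h0 ▸ rfl)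
      have : (1 : ℝ) ≤ (j : ℝ) := by exact_mod_cast Nat.one_le_iff_ne_zero.2 this
      linarith
    · have : (1 : ℝ) ≤ (k : ℝ) := by exact_mod_cast Nat.one_le_iff_ne_zero.2 h0
      linarith
    · have hk : (1 : ℝ) ≤ (k : ℝ) := by exact_mod_cast Nat.one_le_iff_ne_zero.2 h0
      have hj : (1 : ℝ) ≤ (j : ℝ) := by exact_mod_cast Nat.one_le_iff_ne_zero.2 h1
      have := hlt (max k j)
      linarith
  · -- separation radius attained
    intro k
    rcases eq_or_ne k 0 with rfl | hk
    · refine ⟨1, by norm_num, ?_⟩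
      intro m hm
      have h1 : dProper ε 0 1 = 1 := by norm_num [dProper]
      have h2 : dProper ε 0 m = (m : ℝ) := by
        unfold dProper
        rw [if_neg (fun h => hm h.symm), if_pos rfl]
      rw [h1, h2]
      exact_mod_cast Nat.one_le_iff_ne_zero.2 hm
    · refine ⟨0, fun h => hk h.symm, ?_⟩
      intro m hm
      have h1 : dProper ε k 0 = (k : ℝ) := by
        unfold dProper
        rw [if_neg hk, if_neg hk, if_pos rfl]
      rw [h1]
      unfold dProper
      rw [if_neg (fun h => hm h.symm)]
      split_ifs with h0 h1'
      · exact absurd h0 hk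
      · exact le_refl _
      · have hm1 : (1 : ℝ) ≤ (m : ℝ) := by exact_mod_cast Nat.one_le_iff_ne_zero.2 h1'
        have := hlt (max k m)
        linarith
end

section
/- Let M be a metric space with density character Γ > ℵ₀ such that the cofinality of Γ is uncountable. Then M contains a uniformly discrete subset L with card(L) = Γ. -/
universe u

/-- The density character of a metric space: the least cardinality of a dense subset. -/
noncomputable def densChar (M : Type u) [MetricSpace M] : Cardinal.{u} :=
  sInf {c : Cardinal.{u} | ∃ s : Set M, Dense s ∧ Cardinal.mk s = c}

/-- Maximal `r`-separated sets exist and are `r`-nets. -/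
lemma exists_maximal_separated {M : Type u} [MetricSpace M] {r : ℝ} (hr : 0 < r) :
    ∃ S : Set M, (∀ a ∈ S, ∀ b ∈ S, a ≠ b → r ≤ dist a b) ∧
      ∀ x : M, ∃ y ∈ S, dist x y < r := by
  obtain ⟨S, hS⟩ := zorn_subset
      {S : Set M | ∀ a ∈ S, ∀ b ∈ S, a ≠ b → r ≤ dist a b} (fun c hc hchain => by
    refine ⟨⋃₀ c, ?_, fun s hs => Set.subset_sUnion_of_mem hs⟩
    rintro a ⟨s, hs, has⟩ b ⟨t, ht, hbt⟩ hab
    rcases hchain.total hs ht with h | h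
    · exact hc ht a (h has) b hbt hab
    · exact hc hs a has b (h hbt) hab)
  refine ⟨S, hS.prop, fun x => ?_⟩
  by_contra h
  push_neg at h
  have hx : x ∉ S := fun hxS => hr.not_ge (by simpa using h x hxS)
  have : insert x S ∈ {S : Set M | ∀ a ∈ S, ∀ b ∈ S, a ≠ b → r ≤ dist a b} := by
    rintro a (rfl | ha) b (rfl | hb) hab
    · exact absurd rfl hab
    · exact h b hb
    · exact dist_comm a b ▸ h a ha
    · exact hS.prop a ha b hb hab
  have := hS.eq_of_subset this (Set.subset_insert x S)
  exact hx (this ▸ Set.mem_insert x S)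

theorem stmt14 {M : Type u} [MetricSpace M] (Γ : Cardinal.{u})
    (hdens : densChar M = Γ) (hΓ : Cardinal.aleph0 < Γ)
    (hcof : Cardinal.aleph0 < Γ.ord.cof) :
    ∃ L : Set M, Cardinal.mk L = Γ ∧
      ∃ r > (0 : ℝ), ∀ a ∈ L, ∀ b ∈ L, a ≠ b → r ≤ dist a b := by
  -- choose maximal (1/(n+1))-separated sets
  have hpos : ∀ n : ℕ, (0 : ℝ) < 1 / (n + 1) := fun n => by positivity
  choose S hsep hnet using fun n : ℕ => exists_maximal_separated (M := M) (hpos n)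
  -- the union is dense
  have hdense : Dense (⋃ n : ULift.{u} ℕ, S n.down) := by
    rw [Metric.dense_iff]
    intro x ε hε
    obtain ⟨n, hn⟩ := exists_nat_one_div_lt hε
    obtain ⟨y, hy, hxy⟩ := hnet n x
    exact ⟨y, Metric.mem_ball'.mpr (hxy.trans hn), Set.mem_iUnion.mpr ⟨⟨n⟩, hy⟩⟩
  -- hence Γ ≤ card of the union
  have hle : Γ ≤ Cardinal.mk (⋃ n : ULift.{u} ℕ, S n.down) := by
    rw [← hdens]
    exact csInf_le' ⟨_, hdense, rfl⟩
  -- some S n has cardinality ≥ Γ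
  have : ∃ n : ℕ, Γ ≤ Cardinal.mk (S n) := by
    by_contra h
    push_neg at h
    have hsup : (⨆ n : ULift.{u} ℕ, Cardinal.mk (S n.down)) < Γ :=
      Ordinal.iSup_lt (by rwa [Cardinal.mk_uLift, Cardinal.mk_nat, Cardinal.lift_aleph0])
        (fun n => h n.down)
    have := hle.trans (Cardinal.mk_iUnion_le _)
    rw [Cardinal.mk_uLift, Cardinal.mk_nat, Cardinal.lift_aleph0] at this
    have hmul : Cardinal.aleph0 * (⨆ n : ULift.{u} ℕ, Cardinal.mk (S n.down)) < Γ := by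
      rcases eq_or_ne (⨆ n : ULift.{u} ℕ, Cardinal.mk (S n.down)) 0 with h0 | h0
      · rw [h0, mul_zero]; exact Cardinal.aleph0_pos.trans hΓ
      · calc Cardinal.aleph0 * _ ≤ max Cardinal.aleph0 (⨆ n : ULift.{u} ℕ,
              Cardinal.mk (S n.down)) * max Cardinal.aleph0 (⨆ n : ULift.{u} ℕ,
              Cardinal.mk (S n.down)) :=
            mul_le_mul' (le_max_left _ _) (le_max_right _ _)
          _ = max Cardinal.aleph0 (⨆ n : ULift.{u} ℕ, Cardinal.mk (S n.down)) :=
            Cardinal.mul_eq_self (le_max_left _ _)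
          _ < Γ := max_lt hΓ hsup
    exact absurd (this.trans_lt hmul) (lt_irrefl Γ)
  obtain ⟨n, hn⟩ := this
  -- extract a subset of size exactly Γ
  obtain ⟨p, hp⟩ := Cardinal.le_mk_iff_exists_set.mp hn
  refine ⟨Subtype.val '' p, ?_, 1 / (n + 1), hpos n, ?_⟩
  · rw [Cardinal.mk_image_eq Subtype.val_injective, hp]
  · rintro a ⟨⟨a, ha⟩, -, rfl⟩ b ⟨⟨b, hb⟩, -, rfl⟩ hab
    exact hsep n a ha b hb hab
end

section
/- Let M be a metric space with density character Γ > ℵ₀. Then M contains a discrete subset L (every point of L is isolated in L; equivalently, every convergent sequence in L is eventually constant) with card(L) = Γ. -/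
universe u

/-!
Let `S n` be maximal `1/(n+1)`-separated sets. Their union is dense, so `Γ ≤ ⨆ n, #(S n)`, and
`#(S n) ≤ Γ` since a separated set is no larger than a dense one. If some `S n` has cardinality
`Γ`, it is the required set. Otherwise `Γ` is a countable supremum of smaller cardinals, hence
singular, and `L` is built as a union of layers `E k`: `E k` is a uniformly discrete set of regular
cardinality `τ k > #(S k)` avoiding a forbidden region `F k`, and `F (k + 1)` contains a uniform
neighbourhood of `E k`, so later layers keep away from it.

If some point `x` has all its balls of density `Γ`, the forbidden regions are complements of
shrinking balls around `x` and the layers lie in annuli around `x`. Otherwise every point has a ball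
of density `< Γ`; by pigeonhole the layer can be taken among points whose balls of one fixed radius
have density below one fixed bound `< Γ`, so the forbidden regions keep density `< Γ`, and choosing
`τ k` above that density, most of a separated set of size `τ k` lies outside `F k`.
-/

open Cardinal Metric Set Filter Topology
open scoped ENNReal NNReal

namespace Cardinal

variable {α : Type u}

theorem mk_iUnion_le_aleph0_mul {ι : Type} [Countable ι] (S : ι → Set α) :
    #(⋃ i, S i) ≤ ℵ₀ * ⨆ i, #(S i) := by
  have h := mk_iUnion_le_lift S
  simp only [lift_uzero] at h
  exact h.trans (mul_le_mul_left (lift_le_aleph0.2 mk_le_aleph0) _)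

theorem exists_le_mk_of_le_mk_iUnion {ι : Type} [Countable ι] {τ : Cardinal.{u}} (hτ : ℵ₀ < τ)
    (hreg : τ.IsRegular) {S : ι → Set α} (h : τ ≤ #(⋃ i, S i)) : ∃ i, τ ≤ #(S i) := by
  by_contra! hlt
  have hι : lift.{u} #ι < τ := (lift_le_aleph0.2 mk_le_aleph0).trans_lt hτ
  have hsup : ⨆ i, #(S i) < τ :=
    lift_iSup_lt_of_lt_cof_ord (by simpa [hreg.cof_ord] using hι) hlt
  exact h.not_gt ((mk_iUnion_le_aleph0_mul S).trans_lt (mul_lt_of_lt hreg.aleph0_le hτ hsup))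

theorem le_iSup_mk_of_le_mk_iUnion {Γ : Cardinal.{u}} (hΓ : ℵ₀ < Γ) {S : ℕ → Set α}
    (h : Γ ≤ #(⋃ n, S n)) : Γ ≤ ⨆ n, #(S n) := by
  simpa [hΓ.not_ge] using (h.trans (mk_iUnion_le_aleph0_mul S)).trans (mul_le_max _ _)

theorem mk_iUnion_eq_of_le_iSup {Γ : Cardinal.{u}} (hΓ : ℵ₀ ≤ Γ) {S : ℕ → Set α}
    (hle : ∀ n, #(S n) ≤ Γ) (hsup : Γ ≤ ⨆ n, #(S n)) : #(⋃ n, S n) = Γ := by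
  refine le_antisymm ?_ (hsup.trans (ciSup_le' fun n => mk_le_mk_of_subset (subset_iUnion S n)))
  calc #(⋃ n, S n) ≤ ℵ₀ * ⨆ n, #(S n) := mk_iUnion_le_aleph0_mul S
    _ ≤ Γ * Γ := mul_le_mul' hΓ (ciSup_le' hle)
    _ = Γ := mul_eq_self hΓ

theorem le_mk_sdiff_of_mk_inter_lt {τ : Cardinal.{u}} (hτ : ℵ₀ ≤ τ) {S T : Set α}
    (hS : τ ≤ #S) (hST : #(S ∩ T : Set α) < τ) : τ ≤ #(S \ T : Set α) := by
  by_contra! h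
  have := le_mk_sdiff_add_mk S (S ∩ T)
  rw [sdiff_self_inter] at this
  exact hS.not_gt (this.trans_lt (add_lt_of_lt hτ h hST))

theorem not_isRegular_of_le_iSup {Γ : Cardinal.{u}} (hΓ : ℵ₀ < Γ) {g : ℕ → Cardinal.{u}}
    (hg : ∀ n, g n < Γ) (hsup : Γ ≤ ⨆ n, g n) : ¬ Γ.IsRegular := fun hreg =>
  hsup.not_gt (lift_iSup_lt_of_lt_cof_ord (by simpa [hreg.cof_ord] using hΓ) hg)

theorem exists_isRegular_between {Γ c : Cardinal.{u}} (hΓ : ℵ₀ < Γ) (hsing : ¬ Γ.IsRegular)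
    (hc : c < Γ) : ∃ τ, ℵ₀ < τ ∧ τ.IsRegular ∧ c < τ ∧ τ < Γ := by
  have hreg : (Order.succ (max ℵ₀ c)).IsRegular := isRegular_succ (le_max_left _ _)
  refine ⟨_, (le_max_left _ _).trans_lt (Order.lt_succ _), hreg,
    (le_max_right _ _).trans_lt (Order.lt_succ _), ?_⟩
  exact (Order.succ_le_of_lt (max_lt hΓ hc)).lt_of_ne fun h => hsing (h ▸ hreg)

end Cardinal

theorem Metric.exists_isSeparated_isCover {X : Type*} [PseudoEMetricSpace X] (ε : ℝ≥0)
    (A : Set X) : ∃ S ⊆ A, IsSeparated ε S ∧ IsCover ε A S := by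
  obtain ⟨S, hS⟩ := zorn_subset {S | S ⊆ A ∧ IsSeparated (ε : ℝ≥0∞) S} fun c hcS hc =>
    ⟨⋃₀ c, ⟨sUnion_subset fun s hs => (hcS hs).1, hc.pairwise_sUnion.2 fun s hs => (hcS hs).2⟩,
      fun _ => subset_sUnion_of_mem⟩
  exact ⟨S, hS.prop.1, hS.prop.2, IsCover.of_maximal_isSeparated hS⟩

namespace DensityCharacter

variable {M : Type u} [MetricSpace M]

/-- The density character of the subspace `A`, computed with closures in `M`. -/
noncomputable def dens (A : Set M) : Cardinal.{u} :=
  sInf {c | ∃ s ⊆ A, A ⊆ closure s ∧ #s = c}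

theorem densChar_eq_dens_univ : densChar M = dens (univ : Set M) := by
  simp [densChar, dens, dense_iff_closure_eq, univ_subset_iff]

theorem exists_subset_closure_mk_eq_dens (A : Set M) :
    ∃ s ⊆ A, A ⊆ closure s ∧ #s = dens A :=
  csInf_mem (s := {c | ∃ s ⊆ A, A ⊆ closure s ∧ #s = c}) ⟨#A, A, subset_rfl, subset_closure, rfl⟩

theorem dens_le_mk {A s : Set M} (hsA : s ⊆ A) (hAs : A ⊆ closure s) : dens A ≤ #s :=
  csInf_le' ⟨s, hsA, hAs, rfl⟩

theorem dens_union_le (A B : Set M) : dens (A ∪ B) ≤ dens A + dens B := by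
  obtain ⟨s, hsA, hAs, hs⟩ := exists_subset_closure_mk_eq_dens A
  obtain ⟨t, htB, hBt, ht⟩ := exists_subset_closure_mk_eq_dens B
  rw [← hs, ← ht]
  refine (dens_le_mk (union_subset_union hsA htB) ?_).trans (mk_union_le s t)
  exact closure_union (s := s) (t := t) ▸ union_subset_union hAs hBt

theorem dens_iUnion_le {ι : Type u} {B : ι → Set M} {c : Cardinal.{u}}
    (hB : ∀ i, dens (B i) ≤ c) : dens (⋃ i, B i) ≤ #ι * c := by
  choose s hsB hBs hs using fun i => exists_subset_closure_mk_eq_dens (B i)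
  have hdense : (⋃ i, B i) ⊆ closure (⋃ i, s i) :=
    iUnion_subset fun i => (hBs i).trans (closure_mono (subset_iUnion s i))
  calc dens (⋃ i, B i) ≤ #(⋃ i, s i) := dens_le_mk (iUnion_mono hsB) hdense
    _ ≤ #ι * ⨆ i, #(s i) := mk_iUnion_le s
    _ ≤ #ι * c := mul_le_mul_right (ciSup_le' fun i => (hs i).trans_le (hB i)) _

def IsUniformlyDiscrete (E : Set M) : Prop :=
  ∃ ε ≠ 0, IsSeparated ε E

def IsDiscrete (L : Set M) : Prop :=
  ∀ a ∈ L, ∃ r > (0 : ℝ), ∀ b ∈ L, dist a b < r → b = a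

namespace IsUniformlyDiscrete

theorem mono {E E' : Set M} (h : IsUniformlyDiscrete E') (hE : E ⊆ E') : IsUniformlyDiscrete E :=
  let ⟨ε, hε, hsep⟩ := h
  ⟨ε, hε, hsep.subset hE⟩

theorem isDiscrete {E : Set M} (h : IsUniformlyDiscrete E) : IsDiscrete E := by
  obtain ⟨ε, hε, hsep⟩ := h
  obtain ⟨r, -, hr, hrε⟩ := ENNReal.lt_iff_exists_real_btwn.1 (pos_iff_ne_zero.2 hε)
  refine fun a ha => ⟨r, ENNReal.ofReal_pos.1 hr, fun b hb hab => ?_⟩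
  by_contra hba
  exact (hsep ha hb (Ne.symm hba)).not_gt ((edist_lt_ofReal.2 hab).trans hrε)

theorem mk_le_dens {E A : Set M} (h : IsUniformlyDiscrete E) (hEA : E ⊆ A) : #E ≤ dens A := by
  obtain ⟨ε, hε, hsep⟩ := h
  obtain ⟨s, -, hAs, hs⟩ := exists_subset_closure_mk_eq_dens A
  rw [← hs]
  have hnear : ∀ e : E, ∃ p : s, edist (e : M) p < ε / 2 := fun e => by
    obtain ⟨p, hp, hep⟩ :=
      EMetric.mem_closure_iff.1 (hAs (hEA e.2)) (ε / 2) (ENNReal.half_pos hε)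
    exact ⟨⟨p, hp⟩, hep⟩
  choose f hf using hnear
  refine mk_le_of_injective (f := f) fun e e' hee' => Subtype.ext (by_contra fun hne => ?_)
  refine (hsep e.2 e'.2 hne).not_gt ?_
  calc edist (e : M) e' ≤ edist (e : M) (f e) + edist (f e' : M) e' := hee' ▸ edist_triangle _ _ _
    _ < ε / 2 + ε / 2 := ENNReal.add_lt_add (hf e) (edist_comm (e' : M) (f e') ▸ hf e')
    _ = ε := ENNReal.add_halves ε

end IsUniformlyDiscrete

theorem exists_isUniformlyDiscrete_seq (A : Set M) : ∃ S : ℕ → Set M,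
    (∀ n, S n ⊆ A) ∧ (∀ n, IsUniformlyDiscrete (S n)) ∧ dens A ≤ #(⋃ n, S n) := by
  choose S hSA hSsep hScover using fun n : ℕ => exists_isSeparated_isCover ((n : ℝ≥0) + 1)⁻¹ A
  refine ⟨S, hSA, fun n => ⟨_, by simp, hSsep n⟩, dens_le_mk (iUnion_subset hSA) fun a ha => ?_⟩
  refine EMetric.mem_closure_iff.2 fun δ hδ => ?_
  obtain ⟨n, hn⟩ := ENNReal.exists_inv_nat_lt hδ.ne'
  obtain ⟨y, hy, hay⟩ := hScover n ha
  refine ⟨y, mem_iUnion.2 ⟨n, hy⟩, lt_of_le_of_lt ?_ hn⟩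
  calc edist a y ≤ (((n : ℝ≥0) + 1)⁻¹ : ℝ≥0) := hay
    _ ≤ (n : ℝ≥0∞)⁻¹ := by
      rw [ENNReal.coe_inv (by positivity)]
      push_cast
      exact ENNReal.inv_le_inv.2 le_self_add

theorem exists_isUniformlyDiscrete_mk_eq {τ : Cardinal.{u}} (hτ : ℵ₀ < τ) (hreg : τ.IsRegular)
    {A : Set M} (h : τ ≤ dens A) : ∃ E ⊆ A, IsUniformlyDiscrete E ∧ #E = τ := by
  obtain ⟨S, hSA, hSsep, hS⟩ := exists_isUniformlyDiscrete_seq A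
  obtain ⟨n, hn⟩ := exists_le_mk_of_le_mk_iUnion hτ hreg (h.trans hS)
  obtain ⟨E, hES, hE⟩ := le_mk_iff_exists_subset.1 hn
  exact ⟨E, hES.trans (hSA n), (hSsep n).mono hES, hE⟩

structure IsLayer (F E F' : Set M) : Prop where
  subset : F ⊆ F'
  disjoint : Disjoint E F
  isUniformlyDiscrete : IsUniformlyDiscrete E
  ball_subset : ∃ ρ > 0, ∀ a ∈ E, ball a ρ ⊆ F'

theorem isDiscrete_iUnion_of_isLayer {E F : ℕ → Set M}
    (h : ∀ k, IsLayer (F k) (E k) (F (k + 1))) : IsDiscrete (⋃ k, E k) := by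
  have hmono : Monotone F := monotone_nat_of_le_succ fun k => (h k).subset
  choose ρ hρ hball using fun k => (h k).ball_subset
  have hfar : ∀ k m, k < m → ∀ a ∈ E k, ∀ b ∈ E m, ρ k ≤ dist a b := fun k m hkm a ha b hb => by
    by_contra! hab
    exact disjoint_left.1 (h m).disjoint hb (hmono hkm (hball k a ha (mem_ball'.2 hab)))
  intro a ha
  obtain ⟨k, hak⟩ := mem_iUnion.1 ha
  obtain ⟨r, hr, hsep⟩ := (h k).isUniformlyDiscrete.isDiscrete a hak
  have hsmall : ∀ᶠ s in 𝓝[>] (0 : ℝ), s < r ∧ ∀ i ∈ Iic k, s < ρ i :=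
    ((eventually_lt_nhds hr).and ((finite_Iic k).eventually_all.2 fun i _ =>
      eventually_lt_nhds (hρ i))).filter_mono nhdsWithin_le_nhds
  obtain ⟨s, ⟨hsr, hsρ⟩, hs⟩ := (hsmall.and self_mem_nhdsWithin).exists
  refine ⟨s, hs, fun b hb hab => ?_⟩
  obtain ⟨m, hbm⟩ := mem_iUnion.1 hb
  rcases lt_trichotomy k m with hkm | rfl | hmk
  · linarith [hfar k m hkm a hak b hbm, hsρ k (mem_Iic.2 le_rfl)]
  · exact hsep b hbm (hab.trans hsr)
  · linarith [dist_comm a b, hfar m k hmk b hbm a hak, hsρ m hmk.le]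

theorem exists_isDiscrete_mk_eq_of_isLayer {Γ : Cardinal.{u}} (hΓ : ℵ₀ < Γ)
    {g : ℕ → Cardinal.{u}} (hg : ∀ n, g n < Γ) (hsup : Γ ≤ ⨆ n, g n) (P : Set M → Prop)
    (h₀ : P ∅) (hstep : ∀ c < Γ, ∀ F, P F → ∃ E F', P F' ∧ IsLayer F E F' ∧ c ≤ #E ∧ #E < Γ) :
    ∃ L : Set M, #L = Γ ∧ IsDiscrete L := by
  choose! nextE nextF hP hlayer hge hlt using hstep
  let F : ℕ → Set M := fun k => Nat.rec ∅ (fun k Fk => nextF (g k) Fk) k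
  have hF : ∀ k, P (F k) := fun k => Nat.rec h₀ (fun k ih => hP _ (hg k) _ ih) k
  let E : ℕ → Set M := fun k => nextE (g k) (F k)
  have hsupE : Γ ≤ ⨆ k, #(E k) :=
    hsup.trans (ciSup_mono bddAbove_of_small fun k => hge _ (hg k) _ (hF k))
  exact ⟨⋃ k, E k, mk_iUnion_eq_of_le_iSup hΓ.le (fun k => (hlt _ (hg k) _ (hF k)).le) hsupE,
    isDiscrete_iUnion_of_isLayer fun k => hlayer _ (hg k) _ (hF k)⟩

theorem exists_isLayer_compl_ball {Γ c : Cardinal.{u}} (hΓ : ℵ₀ < Γ) (hsing : ¬ Γ.IsRegular)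
    {x : M} (hx : ∀ n : ℕ, Γ ≤ dens (ball x (1 / ((n : ℝ) + 1)))) (hc : c < Γ) {F : Set M}
    (hF : ∃ r > 0, Disjoint F (ball x r)) :
    ∃ E F', (∃ r > 0, Disjoint F' (ball x r)) ∧ IsLayer F E F' ∧ c ≤ #E ∧ #E < Γ := by
  obtain ⟨r, hr, hFr⟩ := hF
  obtain ⟨τ, hτ, hreg, hcτ, hτΓ⟩ := exists_isRegular_between hΓ hsing hc
  obtain ⟨n, hn⟩ := exists_nat_one_div_lt hr
  obtain ⟨E₀, hE₀, hE₀sep, hE₀τ⟩ := exists_isUniformlyDiscrete_mk_eq hτ hreg (hτΓ.le.trans (hx n))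
  have hcover : E₀ \ {x} ⊆ ⋃ m : ℕ, E₀ ∩ {y | 1 / ((m : ℝ) + 1) ≤ dist x y} := by
    rintro y ⟨hy, hyx⟩
    obtain ⟨m, hm⟩ := exists_nat_one_div_lt (dist_pos.2 (Ne.symm hyx))
    exact mem_iUnion.2 ⟨m, hy, hm.le⟩
  have hx₀ : #(E₀ ∩ {x} : Set M) < τ :=
    (mk_le_mk_of_subset inter_subset_right).trans_lt
      ((mk_singleton x).trans_lt (one_lt_aleph0.trans hτ))
  obtain ⟨m, hm⟩ := exists_le_mk_of_le_mk_iUnion hτ hreg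
    ((le_mk_sdiff_of_mk_inter_lt hτ.le hE₀τ.ge hx₀).trans (mk_le_mk_of_subset hcover))
  set ρ := min (1 / ((m : ℝ) + 1) / 2) r
  have hρ : 0 < ρ := by positivity
  refine ⟨_, (ball x ρ)ᶜ, ⟨ρ, hρ, disjoint_compl_left⟩,
    ⟨?_, ?_, hE₀sep.mono inter_subset_left, ρ, hρ, ?_⟩, hcτ.le.trans hm,
    (mk_le_mk_of_subset inter_subset_left).trans_lt (hE₀τ ▸ hτΓ)⟩
  · exact hFr.subset_compl_right.trans (compl_subset_compl.2 (ball_subset_ball (min_le_right _ _)))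
  · exact hFr.symm.mono_left (inter_subset_left.trans (hE₀.trans (ball_subset_ball hn.le)))
  · rintro a ⟨-, ha : 1 / ((m : ℝ) + 1) ≤ dist x a⟩ y hy hyx
    rw [mem_ball] at hy hyx
    linarith [dist_triangle x y a, dist_comm x y, min_le_left (1 / ((m : ℝ) + 1) / 2) r]

theorem exists_isLayer_of_dens_ball_lt {Γ c : Cardinal.{u}} (hΓ : ℵ₀ < Γ)
    (hdens : Γ ≤ dens (univ : Set M)) {g : ℕ → Cardinal.{u}} (hg : ∀ n, g n < Γ)
    (hsup : Γ ≤ ⨆ n, g n) (hx : ∀ x : M, ∃ n : ℕ, dens (ball x (1 / ((n : ℝ) + 1))) < Γ)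
    (hc : c < Γ) {F : Set M} (hF : dens F < Γ) :
    ∃ E F', dens F' < Γ ∧ IsLayer F E F' ∧ c ≤ #E ∧ #E < Γ := by
  obtain ⟨τ, hτ, hreg, hcτ, hτΓ⟩ :=
    exists_isRegular_between hΓ (not_isRegular_of_le_iSup hΓ hg hsup) (max_lt hc hF)
  obtain ⟨E₀, -, hE₀sep, hE₀τ⟩ := exists_isUniformlyDiscrete_mk_eq hτ hreg (hτΓ.le.trans hdens)
  -- a common radius and a common density bound `< Γ` keep the next forbidden region small
  set P : ℕ × ℕ → Set M := fun p => {y | dens (ball y (1 / ((p.1 : ℝ) + 1))) ≤ g p.2}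
  have hcover : E₀ ⊆ ⋃ p, E₀ ∩ P p := fun y hy => by
    obtain ⟨n, hn⟩ := hx y
    obtain ⟨j, hj⟩ := exists_lt_of_lt_ciSup (hn.trans_le hsup)
    exact mem_iUnion.2 ⟨(n, j), hy, hj.le⟩
  obtain ⟨⟨n, j⟩, hnj⟩ :=
    exists_le_mk_of_le_mk_iUnion hτ hreg (hE₀τ.ge.trans (mk_le_mk_of_subset hcover))
  set E := (E₀ ∩ P (n, j)) \ F
  have hEF : #((E₀ ∩ P (n, j)) ∩ F : Set M) < τ :=
    ((hE₀sep.mono (inter_subset_left.trans inter_subset_left)).mk_le_dens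
      inter_subset_right).trans_lt ((le_max_right _ _).trans_lt hcτ)
  have hEτ : τ ≤ #E := le_mk_sdiff_of_mk_inter_lt hτ.le hnj hEF
  have hEΓ : #E < Γ :=
    (mk_le_mk_of_subset (sdiff_subset.trans inter_subset_left)).trans_lt (hE₀τ ▸ hτΓ)
  refine ⟨E, F ∪ ⋃ a : E, ball (a : M) (1 / ((n : ℝ) + 1)), ?_,
    ⟨subset_union_left, disjoint_sdiff_left, hE₀sep.mono (sdiff_subset.trans inter_subset_left), _,
      by positivity, fun a ha => (subset_iUnion (fun a : E => ball (a : M) _) ⟨a, ha⟩).trans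
        subset_union_right⟩, ((le_max_left _ _).trans_lt hcτ).le.trans hEτ, hEΓ⟩
  exact (dens_union_le _ _).trans_lt (add_lt_of_lt hΓ.le hF
    ((dens_iUnion_le fun a => a.2.1.2).trans_lt (mul_lt_of_lt hΓ.le hEΓ (hg j))))

end DensityCharacter

open DensityCharacter

theorem stmt15 {M : Type u} [MetricSpace M] (Γ : Cardinal.{u})
    (hdens : densChar M = Γ) (hΓ : Cardinal.aleph0 < Γ) :
    ∃ L : Set M, Cardinal.mk L = Γ ∧
      ∀ a ∈ L, ∃ r > (0 : ℝ), ∀ b ∈ L, dist a b < r → b = a := by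
  have hΓdens : dens (univ : Set M) = Γ := densChar_eq_dens_univ (M := M) ▸ hdens
  obtain ⟨S, -, hSsep, hS⟩ := exists_isUniformlyDiscrete_seq (univ : Set M)
  by_cases hSΓ : ∃ n, #(S n) = Γ
  · obtain ⟨n, hn⟩ := hSΓ
    exact ⟨S n, hn, (hSsep n).isDiscrete⟩
  push Not at hSΓ
  have hg : ∀ n, #(S n) < Γ := fun n =>
    (((hSsep n).mk_le_dens (subset_univ _)).trans_eq hΓdens).lt_of_ne (hSΓ n)
  have hsup : Γ ≤ ⨆ n, #(S n) := le_iSup_mk_of_le_mk_iUnion hΓ (hΓdens ▸ hS)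
  have hsing := not_isRegular_of_le_iSup hΓ hg hsup
  by_cases hx : ∃ x : M, ∀ n : ℕ, Γ ≤ dens (ball x (1 / ((n : ℝ) + 1)))
  · obtain ⟨x, hx⟩ := hx
    exact exists_isDiscrete_mk_eq_of_isLayer hΓ hg hsup (fun F => ∃ r > 0, Disjoint F (ball x r))
      ⟨1, one_pos, empty_disjoint _⟩ fun c hc F hF => exists_isLayer_compl_ball hΓ hsing hx hc hF
  · push Not at hx
    have h₀ : dens (∅ : Set M) < Γ :=
      (dens_le_mk subset_rfl (empty_subset _)).trans_lt (by simpa using aleph0_pos.trans hΓ)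
    exact exists_isDiscrete_mk_eq_of_isLayer hΓ hg hsup (fun F => dens F < Γ) h₀
      fun c hc F hF => exists_isLayer_of_dens_ball_lt hΓ hΓdens.ge hg hsup hx hc hF
end

section
/- Let M be a pointed metric space whose set M′ of cluster points has density character Γ for some infinite cardinal Γ. Then there is a linear subspace of SNA(M) isometrically isomorphic to c₀(Γ); i.e., there is a linear isometric embedding of c₀(Γ) into Lip₀(M) whose range consists of strongly norm-attaining functions. -/
universe u

/-- The set of cluster (accumulation) points of `M`. -/
def accPts (M : Type u) [MetricSpace M] : Set M :=
  {x : M | x ∈ closure {y : M | y ≠ x}}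

/-- The density character of a subset `s` of a metric space: the least cardinality of a
subset of `s` which is dense in `s`. -/
noncomputable def setDensChar {M : Type u} [MetricSpace M] (s : Set M) : Cardinal.{u} :=
  sInf {c : Cardinal.{u} | ∃ t : Set M, t ⊆ s ∧ s ⊆ closure t ∧ Cardinal.mk t = c}

/-!
Choose centres `c γ ∈ M′` and radii `r γ > 0` with `r γ + r δ ≤ d(c γ, c δ)` for `γ ≠ δ`, and let
`f γ` be the tent `max (r γ - d(·, c γ)) 0` shifted to vanish at the base point. No point lies in
two of the balls, so `∑ λ γ f γ` is `sup |λ γ|`-Lipschitz; as `c γ` is a cluster point, the slope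
`|λ γ|` is realised between `c γ` and a nearby point, and for `λ ∈ c₀(Γ)` nonzero some `|λ γ|` is
the supremum.

Such centres, `dens M′` many, exist in any set `A` of infinite density. The maximal
`1 / (n + 1)`-separated sets `T n` of `A` are dense, so `dens A ≤ ℵ₀ · sup #(T n)`. If some `T n`
is as large as `dens A`, equal radii do. If `dens A = ℵ₀`, balls are added one at a time, keeping
an infinite part of `A` clear of them. Otherwise the cardinals `ν n = max #(T n) ℵ₀ < dens A`
are cofinal in `dens A`. If some point `x` has neighbourhoods of full density, large separated
sets are taken in disjoint shells around `x`. If not, each of `ω` rounds adds, outside the closure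
of the doubled balls chosen so far, a separated set of `ν k⁺` centres in a part of `A` where all
points have neighbourhoods of density at most some `ν n`, so the doubled balls keep density
`< dens A`.
-/

universe v

open Cardinal Metric Set

variable {M : Type u} [MetricSpace M]

theorem setDensChar_le_mk {s t : Set M} (hts : t ⊆ s) (hst : s ⊆ closure t) :
    setDensChar s ≤ #t :=
  csInf_le (OrderBot.bddBelow _) ⟨t, hts, hst, rfl⟩

theorem exists_mk_eq_setDensChar (s : Set M) :
    ∃ t ⊆ s, s ⊆ closure t ∧ #t = setDensChar s :=
  csInf_mem (s := {c | ∃ t ⊆ s, s ⊆ closure t ∧ #t = c}) ⟨#s, s, subset_rfl, subset_closure, rfl⟩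

theorem setDensChar_le_mk_self (s : Set M) : setDensChar s ≤ #s :=
  setDensChar_le_mk subset_rfl subset_closure

theorem setDensChar_empty : setDensChar (∅ : Set M) = 0 := by
  simpa using setDensChar_le_mk_self (∅ : Set M)

theorem setDensChar_union_le (s t : Set M) :
    setDensChar (s ∪ t) ≤ setDensChar s + setDensChar t := by
  obtain ⟨s₀, hs₀, hs, hs₀s⟩ := exists_mk_eq_setDensChar s
  obtain ⟨t₀, ht₀, ht, ht₀t⟩ := exists_mk_eq_setDensChar t
  rw [← hs₀s, ← ht₀t]
  refine (setDensChar_le_mk (union_subset_union hs₀ ht₀) ?_).trans (mk_union_le _ _)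
  rw [closure_union]
  exact union_subset_union hs ht

theorem setDensChar_iUnion_le {ι : Type v} (S : ι → Set M) :
    lift.{v} (setDensChar (⋃ i, S i)) ≤ lift.{u} #ι * ⨆ i, lift.{v} (setDensChar (S i)) := by
  choose t hts hst ht using fun i => exists_mk_eq_setDensChar (S i)
  have hdense : (⋃ i, S i) ⊆ closure (⋃ i, t i) :=
    iUnion_subset fun i => (hst i).trans (closure_mono (subset_iUnion t i))
  refine (lift_le.2 (setDensChar_le_mk (iUnion_mono hts) hdense)).trans ?_
  simpa only [ht] using mk_iUnion_le_lift t

theorem setDensChar_le_aleph0_mul_mk {s T : Set M} (h : s ⊆ closure T) :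
    setDensChar s ≤ ℵ₀ * #T := by
  let P : T × ℕ → Prop := fun a => (s ∩ ball (a.1 : M) (1 / (a.2 + 1))).Nonempty
  choose g hg using fun a : {a // P a} => a.2
  have hdense : s ⊆ closure (range g) := by
    intro y hy
    refine Metric.mem_closure_iff.2 fun ε hε => ?_
    obtain ⟨n, hn⟩ := exists_nat_one_div_lt (half_pos hε)
    obtain ⟨p, hpT, hyp⟩ := Metric.mem_closure_iff.1 (h hy) _ (Nat.one_div_pos_of_nat (n := n))
    have hP : P (⟨p, hpT⟩, n) := ⟨y, hy, by rw [mem_ball]; exact hyp⟩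
    refine ⟨g ⟨_, hP⟩, mem_range_self _, ?_⟩
    have hgp := (hg ⟨_, hP⟩).2
    rw [mem_ball] at hgp
    linarith [dist_triangle_right y (g ⟨_, hP⟩) p]
  calc setDensChar s ≤ #(range g) := setDensChar_le_mk (range_subset_iff.2 fun a => (hg a).1) hdense
    _ ≤ #{a // P a} := mk_range_le
    _ ≤ #(T × ℕ) := mk_subtype_le P
    _ = ℵ₀ * #T := by simp [mul_comm]

theorem setDensChar_le_aleph0_mul {s t : Set M} (h : s ⊆ closure t) :
    setDensChar s ≤ ℵ₀ * setDensChar t := by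
  obtain ⟨t₀, -, ht, ht₀⟩ := exists_mk_eq_setDensChar t
  rw [← ht₀]
  exact setDensChar_le_aleph0_mul_mk (h.trans (closure_minimal ht isClosed_closure))

theorem setDensChar_le_of_subset {s t : Set M} {κ : Cardinal.{u}} (hst : s ⊆ t) (hκ : ℵ₀ ≤ κ)
    (ht : setDensChar t ≤ κ) : setDensChar s ≤ κ :=
  calc setDensChar s ≤ ℵ₀ * setDensChar t := setDensChar_le_aleph0_mul (hst.trans subset_closure)
    _ ≤ ℵ₀ * κ := by gcongr
    _ = κ := aleph0_mul_eq hκ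

theorem le_setDensChar_diff {s t : Set M} {Γ : Cardinal.{u}} (hΓ : ℵ₀ ≤ Γ)
    (hs : Γ ≤ setDensChar s) (hst : setDensChar (s ∩ t) < Γ) : Γ ≤ setDensChar (s \ t) := by
  by_contra! hlt
  have hunion := setDensChar_union_le (s \ t) (s ∩ t)
  rw [sdiff_union_inter] at hunion
  exact (hs.trans hunion).not_gt (add_lt_of_lt hΓ hlt hst)

theorem exists_lt_of_le_aleph0_mul_iSup {Γ d : Cardinal.{u}} {g : ℕ → Cardinal.{u}}
    (hΓ : ℵ₀ < Γ) (h : Γ ≤ ℵ₀ * ⨆ n, g n) (hd : d < Γ) : ∃ n, d < g n := by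
  by_contra! hg
  have : ℵ₀ * ⨆ n, g n ≤ ℵ₀ * d := by gcongr; exact ciSup_le' hg
  exact (h.trans this).not_gt (mul_lt_of_lt hΓ.le hΓ hd)

theorem exists_lt_setDensChar_of_subset_closure_iUnion {s : Set M} {S : ℕ → Set M}
    {Γ d : Cardinal.{u}} (hΓ : ℵ₀ < Γ) (hs : Γ ≤ setDensChar s)
    (h : s ⊆ closure (⋃ n, S n)) (hd : d < Γ) : ∃ n, d < setDensChar (S n) := by
  refine exists_lt_of_le_aleph0_mul_iSup hΓ ?_ hd
  have hU := setDensChar_iUnion_le S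
  simp only [lift_uzero, mk_nat, lift_aleph0] at hU
  calc Γ ≤ ℵ₀ * setDensChar (⋃ n, S n) := hs.trans (setDensChar_le_aleph0_mul h)
    _ ≤ ℵ₀ * (ℵ₀ * ⨆ n, setDensChar (S n)) := by gcongr
    _ = ℵ₀ * ⨆ n, setDensChar (S n) := by rw [← mul_assoc, aleph0_mul_aleph0]

theorem exists_maximal_separated_s16 (S : Set M) {ε : ℝ} (hε : 0 < ε) :
    ∃ N ⊆ S, N.Pairwise (fun p q => ε ≤ dist p q) ∧ ∀ y ∈ S, ∃ p ∈ N, dist y p < ε := by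
  obtain ⟨N, ⟨hNS, hN⟩, hmax⟩ :=
    zorn_subset {N | N ⊆ S ∧ N.Pairwise fun p q => ε ≤ dist p q} fun c hc hchain =>
      ⟨⋃₀ c, ⟨sUnion_subset fun N hN => (hc hN).1,
        (pairwise_sUnion hchain.directedOn).2 fun N hN => (hc hN).2⟩,
        fun _ => subset_sUnion_of_mem⟩
  refine ⟨N, hNS, hN, fun y hy => ?_⟩
  by_contra! hfar
  have hyN : insert y N ∈ {N | N ⊆ S ∧ N.Pairwise fun p q => ε ≤ dist p q} :=
    ⟨insert_subset hy hNS, pairwise_insert.2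
      ⟨hN, fun p hp _ => ⟨hfar p hp, dist_comm y p ▸ hfar p hp⟩⟩⟩
  have := hfar y (hmax hyN (subset_insert y N) (mem_insert y N))
  rw [dist_self] at this
  linarith

theorem exists_separated_nets (S : Set M) :
    ∃ T : ℕ → Set M, (∀ n, T n ⊆ S) ∧ (∀ n, (T n).Pairwise fun p q => 1 / (n + 1 : ℝ) ≤ dist p q) ∧
      setDensChar S ≤ ℵ₀ * ⨆ n, #(T n) := by
  choose T hTS hT hcover using fun n : ℕ =>
    exists_maximal_separated_s16 S (Nat.one_div_pos_of_nat (n := n))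
  refine ⟨T, hTS, hT, ?_⟩
  have hdense : S ⊆ closure (⋃ n, T n) := fun y hy => Metric.mem_closure_iff.2 fun ε hε => by
    obtain ⟨n, hn⟩ := exists_nat_one_div_lt hε
    obtain ⟨p, hp, hyp⟩ := hcover n y hy
    exact ⟨p, mem_iUnion.2 ⟨n, hp⟩, hyp.trans hn⟩
  have hU := mk_iUnion_le_lift T
  simp only [lift_uzero, mk_nat, lift_aleph0] at hU
  exact (setDensChar_le_mk (iUnion_subset hTS) hdense).trans hU

theorem exists_separated_mk_eq_succ {S : Set M} {κ : Cardinal.{u}} (hκ : ℵ₀ ≤ κ)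
    (h : κ < setDensChar S) :
    ∃ ε > 0, ∃ N ⊆ S, N.Pairwise (fun p q => ε ≤ dist p q) ∧ #N = Order.succ κ := by
  obtain ⟨T, hTS, hT, hST⟩ := exists_separated_nets S
  obtain ⟨n, hn⟩ := exists_lt_of_le_aleph0_mul_iSup (hκ.trans_lt h) hST h
  obtain ⟨N, hNT, hN⟩ := le_mk_iff_exists_subset.1 (Order.succ_le_of_lt hn)
  exact ⟨_, Nat.one_div_pos_of_nat, N, hNT.trans (hTS n), (hT n).mono hNT, hN⟩

theorem exists_seq_of_forall_exists {α : Type*} (Q : α → Prop) (R : ℕ → α → α → Prop) {a : α}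
    (ha : Q a) (h : ∀ k x, Q x → ∃ y, Q y ∧ R k x y) :
    ∃ f : ℕ → α, ∀ k, Q (f k) ∧ R k (f k) (f (k + 1)) := by
  choose! g hgQ hgR using h
  let f : ℕ → α := fun k => Nat.rec a g k
  have hf : ∀ k, Q (f k) := fun k => Nat.rec ha (fun k hk => hgQ k _ hk) k
  exact ⟨f, fun k => ⟨hf k, hgR k _ (hf k)⟩⟩

/-- A pair `(p, r) ∈ F` stands for the ball `ball p r`. -/
def IsSeparatedBalls (A : Set M) (F : Set (M × ℝ)) : Prop :=
  (∀ z ∈ F, z.1 ∈ A ∧ 0 < z.2) ∧ F.Pairwise fun z w => z.2 + w.2 ≤ dist z.1 w.1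

theorem isSeparatedBalls_empty (A : Set M) : IsSeparatedBalls A ∅ :=
  ⟨fun _ h => h.elim, pairwise_empty _⟩

theorem IsSeparatedBalls.iUnion {A : Set M} {F : ℕ → Set (M × ℝ)} (hmono : Monotone F)
    (hF : ∀ k, IsSeparatedBalls A (F k)) : IsSeparatedBalls A (⋃ k, F k) := by
  refine ⟨fun z hz => ?_, (pairwise_iUnion hmono.directed_le).2 fun k => (hF k).2⟩
  obtain ⟨k, hk⟩ := mem_iUnion.1 hz
  exact (hF k).1 z hk

theorem IsSeparatedBalls.iUnion_of_lt {A : Set M} {F : ℕ → Set (M × ℝ)}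
    (hF : ∀ k, IsSeparatedBalls A (F k))
    (hlt : ∀ k l, k < l → ∀ z ∈ F k, ∀ w ∈ F l, z.2 + w.2 ≤ dist z.1 w.1) :
    IsSeparatedBalls A (⋃ k, F k) := by
  refine ⟨fun z hz => ?_, fun z hz w hw hzw => ?_⟩
  · obtain ⟨k, hk⟩ := mem_iUnion.1 hz
    exact (hF k).1 z hk
  obtain ⟨k, hk⟩ := mem_iUnion.1 hz
  obtain ⟨l, hl⟩ := mem_iUnion.1 hw
  rcases lt_trichotomy k l with hkl | rfl | hlk
  · exact hlt k l hkl z hk w hl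
  · exact (hF k).2 hk hl hzw
  · rw [dist_comm, add_comm]
    exact hlt l k hlk w hl z hk

theorem isSeparatedBalls_image {A N : Set M} {r : M → ℝ} (hNA : N ⊆ A) (hr : ∀ p ∈ N, 0 < r p)
    (hN : N.Pairwise fun p q => r p + r q ≤ dist p q) :
    IsSeparatedBalls A ((fun p => (p, r p)) '' N) := by
  refine ⟨?_, ?_⟩
  · rintro _ ⟨p, hp, rfl⟩
    exact ⟨hNA hp, hr p hp⟩
  · rintro _ ⟨p, hp, rfl⟩ _ ⟨q, hq, rfl⟩ hpq
    exact hN hp hq fun h => hpq (h ▸ rfl)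

theorem mk_image_graph {α : Type u} (r : α → ℝ) (N : Set α) : #((fun p => (p, r p)) '' N) = #N :=
  mk_image_eq_of_injOn _ _ fun _ _ _ _ h => congrArg Prod.fst h

theorem isSeparatedBalls_image_const {A N : Set M} {δ : ℝ} (hNA : N ⊆ A) (hδ : 0 < δ)
    (hN : N.Pairwise fun p q => δ ≤ dist p q) :
    IsSeparatedBalls A ((fun p => (p, δ / 2)) '' N) :=
  isSeparatedBalls_image hNA (fun _ _ => half_pos hδ) (hN.imp fun p q h => by linarith)

theorem exists_infinite_far {R : Set M} (hR : R.Infinite) :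
    ∃ p ∈ R, ∃ δ > 0, {q ∈ R | δ ≤ dist q p}.Infinite := by
  obtain ⟨u, hu, v, hv, huv⟩ := hR.nontrivial
  have hcover : R ⊆ {q ∈ R | dist u v / 2 ≤ dist q u} ∪ {q ∈ R | dist u v / 2 ≤ dist q v} := by
    intro q hq
    by_contra! h
    simp only [mem_union, mem_ofPred_eq, not_or, not_and, not_le] at h
    linarith [dist_triangle_left u v q, (h.1 hq), (h.2 hq)]
  have hδ : 0 < dist u v / 2 := half_pos (dist_pos.2 huv)
  rcases infinite_union.1 (hR.mono hcover) with h | h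
  exacts [⟨u, hu, _, hδ, h⟩, ⟨v, hv, _, hδ, h⟩]

theorem exists_insert_isSeparatedBalls {A R : Set M} {F : Set (M × ℝ)} {c : ℝ}
    (hF : IsSeparatedBalls A F) (hRA : R ⊆ A) (hR : R.Infinite) (hc : 0 < c)
    (hRF : ∀ q ∈ R, ∀ z ∈ F, z.2 + c ≤ dist q z.1) :
    ∃ a ∉ F, IsSeparatedBalls A (insert a F) ∧ ∃ R' ⊆ A, R'.Infinite ∧
      ∃ c' > 0, ∀ q ∈ R', ∀ z ∈ insert a F, z.2 + c' ≤ dist q z.1 := by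
  obtain ⟨p, hp, δ, hδ, hfar⟩ := exists_infinite_far hR
  set r := min c δ / 2
  have hr : 0 < r := half_pos (lt_min hc hδ)
  have hrc : r ≤ c / 2 := div_le_div_of_nonneg_right (min_le_left c δ) zero_le_two
  have hrδ : r ≤ δ / 2 := div_le_div_of_nonneg_right (min_le_right c δ) zero_le_two
  have hpF : ∀ z ∈ F, z.2 + r ≤ dist p z.1 := fun z hz => by linarith [hRF p hp z hz]
  refine ⟨(p, r), fun hmem => ?_, ⟨?_, ?_⟩, _, (sep_subset R _).trans hRA, hfar, r, hr, ?_⟩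
  · linarith [dist_self p ▸ hpF _ hmem]
  · rintro z (rfl | hz)
    exacts [⟨hRA hp, hr⟩, hF.1 z hz]
  · refine hF.2.insert fun z hz _ => ⟨?_, ?_⟩
    · linarith [hpF z hz]
    · linarith [dist_comm p z.1 ▸ hpF z hz]
  · rintro q ⟨hqR, hqp⟩ z (rfl | hz)
    · linarith
    · linarith [hRF q hqR z hz]

theorem exists_isSeparatedBalls_of_infinite {A : Set M} (hA : A.Infinite) :
    ∃ F, IsSeparatedBalls A F ∧ F.Infinite := by
  let Q : Set (M × ℝ) → Prop := fun F => IsSeparatedBalls A F ∧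
    ∃ R ⊆ A, R.Infinite ∧ ∃ c > 0, ∀ q ∈ R, ∀ z ∈ F, z.2 + c ≤ dist q z.1
  have h0 : Q ∅ := ⟨isSeparatedBalls_empty A, A, subset_rfl, hA, 1, one_pos, by simp⟩
  obtain ⟨F, hF⟩ := exists_seq_of_forall_exists Q (fun _ F F' => ∃ a ∉ F, F' = insert a F) h0
    fun _ F ⟨hF, R, hRA, hR, c, hc, hRF⟩ => by
      obtain ⟨a, haF, hF', hQ'⟩ := exists_insert_isSeparatedBalls hF hRA hR hc hRF
      exact ⟨_, ⟨hF', hQ'⟩, a, haF, rfl⟩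
  choose a haF hFa using fun k => (hF k).2
  have hmono : Monotone F := monotone_nat_of_le_succ fun k => (hFa k).symm ▸ subset_insert _ _
  have ha : Function.Injective a := Function.Injective.of_lt_imp_ne fun j k hjk hak =>
    haF k (hak ▸ hmono hjk (hFa j ▸ mem_insert (a j) (F j)))
  exact ⟨⋃ k, F k, IsSeparatedBalls.iUnion hmono fun k => (hF k).1.1,
    infinite_of_injective_forall_mem ha fun k => mem_iUnion.2 ⟨k + 1, hFa k ▸ mem_insert _ _⟩⟩

theorem exists_lt_setDensChar_shell {A : Set M} {x : M} {Γ d : Cardinal.{u}} (hΓ : ℵ₀ < Γ)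
    (hx : ∀ ρ > 0, Γ ≤ setDensChar (ball x ρ ∩ A)) {ρ : ℝ} (hρ : 0 < ρ) (hd : d < Γ) :
    ∃ ρ' > 0, ρ' < ρ ∧ d < setDensChar (A ∩ (ball x ρ \ closedBall x ρ')) := by
  have hs : Γ ≤ setDensChar ((ball x ρ ∩ A) \ {x}) := by
    refine le_setDensChar_diff hΓ.le (hx ρ hρ) ((setDensChar_le_mk_self _).trans_lt ?_)
    exact (mk_le_mk_of_subset inter_subset_right).trans_lt (by simpa using one_lt_aleph0.trans hΓ)
  have hcover : (ball x ρ ∩ A) \ {x} ⊆ ⋃ n : ℕ, A ∩ (ball x ρ \ closedBall x (ρ / (n + 2))) := by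
    rintro y ⟨⟨hyρ, hyA⟩, hyx⟩
    have hy : 0 < dist y x := dist_pos.2 hyx
    obtain ⟨n, hn⟩ := exists_nat_gt (ρ / dist y x)
    refine mem_iUnion.2 ⟨n, hyA, hyρ, ?_⟩
    rw [mem_closedBall, not_le, div_lt_iff₀ (by positivity)]
    rw [div_lt_iff₀ hy] at hn
    nlinarith
  obtain ⟨n, hn⟩ :=
    exists_lt_setDensChar_of_subset_closure_iUnion hΓ hs (hcover.trans subset_closure) hd
  exact ⟨ρ / (n + 2), by positivity, div_lt_self hρ (by linarith), hn⟩

theorem exists_isSeparatedBalls_of_shells {A : Set M} {x : M} {ρ : ℕ → ℝ}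
    {ν : ℕ → Cardinal.{u}} (hρ : StrictAnti ρ) (hν : ∀ k, ℵ₀ ≤ ν k)
    (hD : ∀ k, ν k < setDensChar (A ∩ (ball x (ρ k) \ closedBall x (ρ (k + 1))))) :
    ∃ F, IsSeparatedBalls A F ∧ ∀ k, ν k < #F := by
  choose ε hε N hN hNsep hNcard using fun k => exists_separated_mk_eq_succ (hν k) (hD k)
  let r : ℕ → M → ℝ := fun k p => min (ε k) (min (dist p x - ρ (k + 1)) (ρ k - dist p x)) / 2
  have hr_le : ∀ k p, 2 * r k p ≤ ε k ∧ 2 * r k p ≤ dist p x - ρ (k + 1) ∧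
      2 * r k p ≤ ρ k - dist p x := fun k p => by
    rw [mul_div_cancel₀ _ two_ne_zero]
    exact ⟨min_le_left _ _, (min_le_right _ _).trans (min_le_left _ _),
      (min_le_right _ _).trans (min_le_right _ _)⟩
  have hr : ∀ k, ∀ p ∈ N k, 0 < r k p := fun k p hp => by
    obtain ⟨-, hpρ, hpρ'⟩ := hN k hp
    rw [mem_ball] at hpρ
    rw [mem_closedBall, not_le] at hpρ'
    exact half_pos (lt_min (hε k) (lt_min (by linarith) (by linarith)))
  have hsep : ∀ k, IsSeparatedBalls A ((fun p => (p, r k p)) '' N k) := fun k =>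
    isSeparatedBalls_image ((hN k).trans inter_subset_left) (hr k)
      ((hNsep k).imp fun p q h => by linarith [(hr_le k p).1, (hr_le k q).1])
  refine ⟨_, IsSeparatedBalls.iUnion_of_lt hsep ?_, fun k => ?_⟩
  · rintro k l hkl _ ⟨p, hp, rfl⟩ _ ⟨q, hq, rfl⟩
    have hρl : ρ l ≤ ρ (k + 1) := hρ.antitone hkl
    linarith [dist_triangle p q x, (hr_le k p).2.1, (hr_le l q).2.2, hr k p hp, hr l q hq]
  · calc ν k < Order.succ (ν k) := Order.lt_succ (ν k)
      _ = #((fun p => (p, r k p)) '' N k) := ((mk_image_graph (r k) (N k)).trans (hNcard k)).symm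
      _ ≤ _ := mk_le_mk_of_subset (subset_iUnion (fun k => (fun p => (p, r k p)) '' N k) k)

theorem exists_isSeparatedBalls_of_forall_le_setDensChar_ball {A : Set M} {x : M}
    {Γ : Cardinal.{u}} (hx : ∀ ρ > 0, Γ ≤ setDensChar (ball x ρ ∩ A)) {ν : ℕ → Cardinal.{u}}
    (hν : ∀ k, ℵ₀ ≤ ν k) (hνΓ : ∀ k, ν k < Γ) :
    ∃ F, IsSeparatedBalls A F ∧ ∀ k, ν k < #F := by
  have hΓ : ℵ₀ < Γ := (hν 0).trans_lt (hνΓ 0)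
  obtain ⟨ρ, hρ⟩ := exists_seq_of_forall_exists (fun ρ : ℝ => 0 < ρ)
    (fun k ρ ρ' => ρ' < ρ ∧ ν k < setDensChar (A ∩ (ball x ρ \ closedBall x ρ'))) one_pos
    fun k ρ hρ => by
      obtain ⟨ρ', hρ', hlt, hD⟩ := exists_lt_setDensChar_shell hΓ hx hρ (hνΓ k)
      exact ⟨ρ', hρ', hlt, hD⟩
  exact exists_isSeparatedBalls_of_shells (strictAnti_nat_of_succ_lt fun k => (hρ k).2.1) hν
    fun k => (hρ k).2.2

theorem setDensChar_biUnion_le {ι : Type u} (s : Set ι) (S : ι → Set M) {κ : Cardinal.{u}}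
    (h : ∀ i ∈ s, setDensChar (S i) ≤ κ) : setDensChar (⋃ i ∈ s, S i) ≤ #s * κ := by
  have hU := setDensChar_iUnion_le fun i : s => S i
  simp only [lift_id] at hU
  rw [biUnion_eq_iUnion]
  refine hU.trans ?_
  gcongr
  exact ciSup_le' fun i => h i.1 i.2

def doubledBalls (A : Set M) (F : Set (M × ℝ)) : Set M :=
  ⋃ z ∈ F, ball z.1 (2 * z.2) ∩ A

theorem exists_lt_setDensChar_locally_small {A U : Set M} {ν : ℕ → Cardinal.{u}}
    (hν : ∀ n, ℵ₀ ≤ ν n) (hA : ℵ₀ < setDensChar A)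
    (hcof : ∀ d < setDensChar A, ∃ n, d < ν n)
    (hx : ∀ y, ∃ ρ > 0, setDensChar (ball y ρ ∩ A) < setDensChar A)
    (hU : setDensChar U < setDensChar A) {d : Cardinal.{u}} (hd : d < setDensChar A) :
    ∃ n, d < setDensChar
      {y ∈ A | ∃ ρ > 0, setDensChar (ball y ρ ∩ A) ≤ ν n ∧ Disjoint (ball y ρ) U} := by
  have hV : setDensChar A ≤ setDensChar (A \ closure U) :=
    le_setDensChar_diff hA.le le_rfl
      ((setDensChar_le_aleph0_mul inter_subset_right).trans_lt (mul_lt_of_lt hA.le hA hU))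
  refine exists_lt_setDensChar_of_subset_closure_iUnion hA hV (Subset.trans ?_ subset_closure) hd
  rintro y ⟨hyA, hyU⟩
  obtain ⟨ρ, hρ, hρA⟩ := hx y
  obtain ⟨n, hn⟩ := hcof _ hρA
  obtain ⟨δ, hδ, hδU⟩ := Metric.isOpen_iff.1 isClosed_closure.isOpen_compl y hyU
  refine mem_iUnion.2 ⟨n, hyA, min ρ δ, lt_min hρ hδ, ?_, ?_⟩
  · exact setDensChar_le_of_subset (inter_subset_inter_left A (ball_subset_ball (min_le_left ρ δ)))
      (hν n) hn.le
  · exact disjoint_left.2 fun z hz hzU =>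
      hδU (ball_subset_ball (min_le_right ρ δ) hz) (subset_closure hzU)

theorem add_le_dist_of_disjoint_doubledBalls {A : Set M} {F : Set (M × ℝ)}
    (hF : IsSeparatedBalls A F) {z : M × ℝ} (hz : z ∈ F) {p : M} (hpA : p ∈ A) {s : ℝ}
    (hs : 0 < s) (hp : Disjoint (ball p (2 * s)) (doubledBalls A F)) : z.2 + s ≤ dist z.1 p := by
  obtain ⟨hzA, hz0⟩ := hF.1 z hz
  have hzU : z.1 ∈ doubledBalls A F := mem_biUnion hz ⟨mem_ball_self (by positivity), hzA⟩
  have h₁ : 2 * z.2 ≤ dist p z.1 := not_lt.1 fun h =>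
    disjoint_left.1 hp (mem_ball_self (by positivity)) (mem_biUnion hz ⟨h, hpA⟩)
  have h₂ : 2 * s ≤ dist z.1 p := not_lt.1 fun h => disjoint_left.1 hp h hzU
  linarith [dist_comm p z.1]

theorem exists_union_isSeparatedBalls {A N : Set M} {F : Set (M × ℝ)} {ε : ℝ} {κ : Cardinal.{u}}
    (hF : IsSeparatedBalls A F) (hU : setDensChar (doubledBalls A F) < setDensChar A)
    (hNA : N ⊆ A) (hε : 0 < ε) (hN : N.Pairwise fun p q => ε ≤ dist p q)
    (hNcard : #N < setDensChar A) (hκ : ℵ₀ ≤ κ) (hκA : κ < setDensChar A)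
    (hNκ : ∀ p ∈ N, ∃ ρ > 0, setDensChar (ball p ρ ∩ A) ≤ κ ∧
      Disjoint (ball p ρ) (doubledBalls A F)) :
    ∃ F', (IsSeparatedBalls A F' ∧ setDensChar (doubledBalls A F') < setDensChar A) ∧
      F ⊆ F' ∧ #N ≤ #F' := by
  choose! ρ hρ hρA hρU using hNκ
  let r : M → ℝ := fun p => min ε (ρ p) / 2
  have hrε : ∀ p, 2 * r p ≤ ε := fun p => by dsimp only [r]; linarith [min_le_left ε (ρ p)]
  have hrρ : ∀ p, 2 * r p ≤ ρ p := fun p => by dsimp only [r]; linarith [min_le_right ε (ρ p)]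
  have hr : ∀ p ∈ N, 0 < r p := fun p hp => half_pos (lt_min hε (hρ p hp))
  set G := (fun p => (p, r p)) '' N
  have hG : IsSeparatedBalls A G :=
    isSeparatedBalls_image hNA hr (hN.imp fun p q h => by linarith [hrε p, hrε q])
  have hGU : setDensChar (doubledBalls A G) ≤ #N * κ := by
    rw [← mk_image_graph r N]
    refine setDensChar_biUnion_le G _ ?_
    rintro _ ⟨p, hp, rfl⟩
    exact setDensChar_le_of_subset (inter_subset_inter_left A (ball_subset_ball (hrρ p))) hκ
      (hρA p hp)
  refine ⟨F ∪ G, ⟨⟨?_, pairwise_union.2 ⟨hF.2, hG.2, ?_⟩⟩, ?_⟩, subset_union_left,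
    (mk_image_graph r N).symm.le.trans (mk_le_mk_of_subset subset_union_right)⟩
  · rintro z (hz | hz)
    exacts [hF.1 z hz, hG.1 z hz]
  · rintro z hz _ ⟨p, hp, rfl⟩ -
    have h := add_le_dist_of_disjoint_doubledBalls hF hz (hNA hp) (hr p hp)
      ((hρU p hp).mono_left (ball_subset_ball (hrρ p)))
    exact ⟨h, by linarith [dist_comm p z.1]⟩
  · have hA : ℵ₀ ≤ setDensChar A := hκ.trans hκA.le
    calc setDensChar (doubledBalls A (F ∪ G))
        ≤ setDensChar (doubledBalls A F) + setDensChar (doubledBalls A G) := by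
          rw [doubledBalls, biUnion_union]
          exact setDensChar_union_le _ _
      _ < setDensChar A := add_lt_of_lt hA hU (hGU.trans_lt (mul_lt_of_lt hA hNcard hκA))

theorem exists_isSeparatedBalls_of_locally_small {A : Set M} {ν : ℕ → Cardinal.{u}}
    (hν : ∀ n, ℵ₀ ≤ ν n) (hνA : ∀ n, ν n < setDensChar A)
    (hcof : ∀ d < setDensChar A, ∃ n, d < ν n)
    (hx : ∀ y, ∃ ρ > 0, setDensChar (ball y ρ ∩ A) < setDensChar A) :
    ∃ F, IsSeparatedBalls A F ∧ ∀ k, ν k < #F := by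
  have hA : ℵ₀ < setDensChar A := (hν 0).trans_lt (hνA 0)
  let Q : Set (M × ℝ) → Prop := fun F =>
    IsSeparatedBalls A F ∧ setDensChar (doubledBalls A F) < setDensChar A
  have h0 : Q ∅ := ⟨isSeparatedBalls_empty A, by
    simpa [doubledBalls, setDensChar_empty] using aleph0_pos.trans hA⟩
  obtain ⟨F, hF⟩ := exists_seq_of_forall_exists Q (fun k F F' => F ⊆ F' ∧ ν k < #F') h0
    fun k F ⟨hF, hU⟩ => by
      obtain ⟨n, hn⟩ := exists_lt_setDensChar_locally_small hν hA hcof hx hU (hνA k)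
      obtain ⟨ε, hε, N, hNV, hN, hNcard⟩ := exists_separated_mk_eq_succ (hν k) hn
      obtain ⟨m, hm⟩ := hcof _ (hνA k)
      have hsucc : Order.succ (ν k) < setDensChar A := (Order.succ_le_of_lt hm).trans_lt (hνA m)
      obtain ⟨F', hF', hFF', hNF'⟩ := exists_union_isSeparatedBalls hF hU
        (hNV.trans (sep_subset _ _)) hε hN (hNcard ▸ hsucc) (hν n) (hνA n) fun p hp => (hNV hp).2
      exact ⟨F', hF', hFF', (Order.lt_succ (ν k)).trans_le (hNcard ▸ hNF')⟩
  exact ⟨⋃ k, F k, IsSeparatedBalls.iUnion (monotone_nat_of_le_succ fun k => (hF k).2.1)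
    fun k => (hF k).1.1,
    fun k => (hF k).2.2.trans_le (mk_le_mk_of_subset (subset_iUnion F (k + 1)))⟩

theorem exists_isSeparatedBalls {A : Set M} (hA : ℵ₀ ≤ setDensChar A) :
    ∃ F, IsSeparatedBalls A F ∧ setDensChar A ≤ #F := by
  obtain ⟨T, hTA, hT, hAT⟩ := exists_separated_nets A
  by_cases huniform : ∃ n, setDensChar A ≤ #(T n)
  · obtain ⟨n, hn⟩ := huniform
    exact ⟨_, isSeparatedBalls_image_const (hTA n) Nat.one_div_pos_of_nat (hT n),
      (mk_image_graph _ _).symm ▸ hn⟩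
  push Not at huniform
  rcases hA.eq_or_lt with hcount | hunc
  · have hAinf : A.Infinite := fun hfin =>
      (hA.trans (setDensChar_le_mk_self A)).not_gt hfin.lt_aleph0
    obtain ⟨F, hF, hFinf⟩ := exists_isSeparatedBalls_of_infinite hAinf
    exact ⟨F, hF, hcount ▸ aleph0_le_mk_iff.2 hFinf.to_subtype⟩
  let ν : ℕ → Cardinal.{u} := fun n => max #(T n) ℵ₀
  have hcof : ∀ d < setDensChar A, ∃ n, d < ν n := fun d hd =>
    (exists_lt_of_le_aleph0_mul_iSup hunc hAT hd).imp fun n hn => hn.trans_le (le_max_left _ _)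
  suffices ∃ F, IsSeparatedBalls A F ∧ ∀ n, ν n < #F by
    obtain ⟨F, hF, hνF⟩ := this
    refine ⟨F, hF, le_of_not_gt fun hlt => ?_⟩
    obtain ⟨n, hn⟩ := hcof _ hlt
    exact lt_asymm hn (hνF n)
  have hν : ∀ n, ℵ₀ ≤ ν n := fun n => le_max_right _ _
  have hνA : ∀ n, ν n < setDensChar A := fun n => max_lt (huniform n) hunc
  by_cases hx : ∃ x, ∀ ρ > 0, setDensChar A ≤ setDensChar (ball x ρ ∩ A)
  · obtain ⟨x, hx⟩ := hx
    exact exists_isSeparatedBalls_of_forall_le_setDensChar_ball hx hν hνA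
  · push Not at hx
    exact exists_isSeparatedBalls_of_locally_small hν hνA hcof hx

theorem exists_separated_family {A : Set M} (hA : ℵ₀ ≤ setDensChar A) {ι : Type u}
    (hι : #ι ≤ setDensChar A) :
    ∃ (c : ι → M) (r : ι → ℝ), (∀ i, c i ∈ A ∧ 0 < r i) ∧
      Pairwise fun i j => r i + r j ≤ dist (c i) (c j) := by
  obtain ⟨F, hF, hAF⟩ := exists_isSeparatedBalls hA
  obtain ⟨e⟩ := (le_def ι F).1 (hι.trans hAF)
  exact ⟨fun i => (e i).1.1, fun i => (e i).1.2, fun i => hF.1 _ (e i).2,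
    fun i j hij => hF.2 (e i).2 (e j).2 fun h => hij (e.injective (Subtype.ext h))⟩

theorem bddAbove_range_abs {ι : Type*} {lam : ι → ℝ}
    (hlam : ∀ ε > (0 : ℝ), {i | ε ≤ |lam i|}.Finite) : BddAbove (range fun i => |lam i|) := by
  refine (((hlam 1 one_pos).image fun i => |lam i|).bddAbove.union (bddAbove_Iic (a := 1))).mono ?_
  rintro _ ⟨i, rfl⟩
  by_cases h : 1 ≤ |lam i|
  exacts [Or.inl (mem_image_of_mem _ h), Or.inr (not_le.1 h).le]

theorem exists_forall_abs_le {ι : Type*} {lam : ι → ℝ}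
    (hlam : ∀ ε > (0 : ℝ), {i | ε ≤ |lam i|}.Finite) (hne : lam ≠ 0) :
    ∃ i, ∀ j, |lam j| ≤ |lam i| := by
  obtain ⟨j, hj⟩ := Function.ne_iff.1 hne
  obtain ⟨i, hji, hmax⟩ :=
    exists_max_image _ (fun i => |lam i|) (hlam _ (abs_pos.2 hj)) ⟨j, le_refl |lam j|⟩
  refine ⟨i, fun k => ?_⟩
  by_cases hk : |lam j| ≤ |lam k|
  exacts [hmax k hk, (not_le.1 hk).le.trans hji]

theorem exists_ne_dist_lt_of_mem_accPts {x : M} (hx : x ∈ accPts M) {ε : ℝ} (hε : 0 < ε) :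
    ∃ q, q ≠ x ∧ dist q x < ε := by
  obtain ⟨q, hq, hxq⟩ := Metric.mem_closure_iff.1 hx ε hε
  exact ⟨q, hq, dist_comm x q ▸ hxq⟩

def bump (p : M) (r : ℝ) (z : M) : ℝ := max (r - dist z p) 0

theorem bump_nonneg (p : M) (r : ℝ) (z : M) : 0 ≤ bump p r z := le_max_right _ _

theorem bump_eq_sub {p z : M} {r : ℝ} (h : dist z p ≤ r) : bump p r z = r - dist z p :=
  max_eq_left (sub_nonneg.2 h)

theorem dist_lt_of_bump_ne_zero {p z : M} {r : ℝ} (h : bump p r z ≠ 0) : dist z p < r := by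
  by_contra! h'
  exact h (max_eq_right (by linarith))

theorem abs_bump_sub_le (p : M) (r : ℝ) (z w : M) : |bump p r z - bump p r w| ≤ dist z w :=
  calc |bump p r z - bump p r w| ≤ |r - dist z p - (r - dist w p)| := abs_max_sub_max_le_abs _ _ _
    _ = |dist w p - dist z p| := by rw [sub_sub_sub_cancel_left]
    _ ≤ dist z w := dist_comm z w ▸ abs_dist_sub_le w z p

section BumpFamily

variable {ι : Type*} {c : ι → M} {r : ι → ℝ}

noncomputable def bumpSum (c : ι → M) (r : ι → ℝ) (lam : ι → ℝ) (z : M) : ℝ :=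
  ∑' i, lam i * bump (c i) (r i) z

theorem hasSum_mul_bump {a : ι} {z : M} (ha : ∀ i ≠ a, bump (c i) (r i) z = 0) (lam : ι → ℝ) :
    HasSum (fun i => lam i * bump (c i) (r i) z) (lam a * bump (c a) (r a) z) :=
  hasSum_single a fun i hi => by rw [ha i hi, mul_zero]

theorem bumpSum_eq {a : ι} {z : M} (ha : ∀ i ≠ a, bump (c i) (r i) z = 0) (lam : ι → ℝ) :
    bumpSum c r lam z = lam a * bump (c a) (r a) z :=
  (hasSum_mul_bump ha lam).tsum_eq

variable (hsep : Pairwise fun i j => r i + r j ≤ dist (c i) (c j))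
include hsep

theorem eq_of_bump_ne_zero {z : M} {i j : ι} (hi : bump (c i) (r i) z ≠ 0)
    (hj : bump (c j) (r j) z ≠ 0) : i = j := by
  by_contra hij
  linarith [hsep hij, dist_lt_of_bump_ne_zero hi, dist_lt_of_bump_ne_zero hj,
    dist_triangle_left (c i) (c j) z]

theorem exists_forall_ne_bump_eq_zero [Nonempty ι] (z : M) :
    ∃ a, ∀ i ≠ a, bump (c i) (r i) z = 0 := by
  by_cases h : ∃ a, bump (c a) (r a) z ≠ 0
  · obtain ⟨a, ha⟩ := h
    exact ⟨a, fun i hi => by_contra fun hi' => hi (eq_of_bump_ne_zero hsep hi' ha)⟩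
  · push Not at h
    exact ⟨Classical.arbitrary ι, fun i _ => h i⟩

theorem tsum_mul_bump_sub [Nonempty ι] (lam : ι → ℝ) (z w : M) :
    ∑' i, lam i * (bump (c i) (r i) z - bump (c i) (r i) w) =
      bumpSum c r lam z - bumpSum c r lam w := by
  obtain ⟨a, ha⟩ := exists_forall_ne_bump_eq_zero hsep z
  obtain ⟨b, hb⟩ := exists_forall_ne_bump_eq_zero hsep w
  simp only [mul_sub]
  rw [((hasSum_mul_bump ha lam).sub (hasSum_mul_bump hb lam)).tsum_eq, bumpSum_eq ha, bumpSum_eq hb]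

theorem bump_add_bump_le_dist {i j : ι} (hij : i ≠ j) {z w : M}
    (hiw : bump (c i) (r i) w = 0) (hjz : bump (c j) (r j) z = 0) :
    bump (c i) (r i) z + bump (c j) (r j) w ≤ dist z w := by
  have hi := abs_bump_sub_le (c i) (r i) z w
  have hj := abs_bump_sub_le (c j) (r j) w z
  rw [hiw, sub_zero, abs_of_nonneg (bump_nonneg _ _ _)] at hi
  rw [hjz, sub_zero, abs_of_nonneg (bump_nonneg _ _ _), dist_comm] at hj
  by_cases hi0 : bump (c i) (r i) z = 0
  · linarith
  by_cases hj0 : bump (c j) (r j) w = 0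
  · linarith
  rw [bump_eq_sub (dist_lt_of_bump_ne_zero hi0).le, bump_eq_sub (dist_lt_of_bump_ne_zero hj0).le]
  linarith [hsep hij, dist_triangle4 (c i) z w (c j), dist_comm (c i) z]

theorem abs_bumpSum_sub_le [Nonempty ι] {lam : ι → ℝ} {L : ℝ} (hL : ∀ i, |lam i| ≤ L) (z w : M) :
    |bumpSum c r lam z - bumpSum c r lam w| ≤ L * dist z w := by
  have hL0 : 0 ≤ L := (abs_nonneg _).trans (hL (Classical.arbitrary ι))
  obtain ⟨a, ha⟩ := exists_forall_ne_bump_eq_zero hsep z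
  obtain ⟨b, hb⟩ := exists_forall_ne_bump_eq_zero hsep w
  rw [bumpSum_eq ha, bumpSum_eq hb]
  obtain rfl | hab := eq_or_ne a b
  · rw [← mul_sub, abs_mul]
    exact mul_le_mul (hL a) (abs_bump_sub_le _ _ z w) (abs_nonneg _) hL0
  calc |lam a * bump (c a) (r a) z - lam b * bump (c b) (r b) w|
      ≤ |lam a| * bump (c a) (r a) z + |lam b| * bump (c b) (r b) w := by
        refine (abs_sub _ _).trans ?_
        rw [abs_mul, abs_mul, abs_of_nonneg (bump_nonneg _ _ _), abs_of_nonneg (bump_nonneg _ _ _)]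
    _ ≤ L * (bump (c a) (r a) z + bump (c b) (r b) w) := by
        rw [mul_add]
        exact add_le_add (mul_le_mul_of_nonneg_right (hL a) (bump_nonneg _ _ _))
          (mul_le_mul_of_nonneg_right (hL b) (bump_nonneg _ _ _))
    _ ≤ L * dist z w := by
        gcongr
        exact bump_add_bump_le_dist hsep hab (hb a hab) (ha b hab.symm)

theorem bumpSum_sub_of_dist_lt (lam : ι → ℝ) {i : ι} (hr : 0 < r i) {q : M}
    (hq : dist q (c i) < r i) :
    bumpSum c r lam (c i) - bumpSum c r lam q = lam i * dist q (c i) := by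
  have hvanish : ∀ {z}, dist z (c i) < r i → ∀ j ≠ i, bump (c j) (r j) z = 0 :=
    fun hz j hj => by_contra fun h => hj (eq_of_bump_ne_zero hsep h (by
      rw [bump_eq_sub hz.le]
      linarith))
  rw [bumpSum_eq (hvanish (by rwa [dist_self])) lam, bumpSum_eq (hvanish hq) lam,
    bump_eq_sub (by rw [dist_self]; exact hr.le), bump_eq_sub hq.le, dist_self]
  ring

theorem lipNormEq_bumpSum_sub [Nonempty ι] (hr : ∀ i, 0 < r i) (hc : ∀ i, c i ∈ accPts M)
    {lam : ι → ℝ} (hlam : BddAbove (range fun i => |lam i|)) (z₀ : M) :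
    LipNormEq (fun z => bumpSum c r lam z - bumpSum c r lam z₀) (⨆ i, |lam i|) := by
  refine ⟨fun p q => ?_, fun L _ hL => ciSup_le fun i => ?_⟩
  · rw [sub_sub_sub_cancel_right]
    exact abs_bumpSum_sub_le hsep (le_ciSup hlam) p q
  · obtain ⟨q, hqi, hq⟩ := exists_ne_dist_lt_of_mem_accPts (hc i) (hr i)
    have hLi := hL (c i) q
    rw [sub_sub_sub_cancel_right, bumpSum_sub_of_dist_lt hsep lam (hr i) hq, abs_mul,
      abs_of_nonneg dist_nonneg, dist_comm] at hLi
    exact le_of_mul_le_mul_right hLi (dist_pos.2 hqi.symm)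

theorem exists_abs_bumpSum_sub_eq (hr : ∀ i, 0 < r i) (hc : ∀ i, c i ∈ accPts M) {lam : ι → ℝ}
    {i : ι} (hi : ∀ j, |lam j| ≤ |lam i|) :
    ∃ p q, p ≠ q ∧ |bumpSum c r lam p - bumpSum c r lam q| = (⨆ j, |lam j|) * dist p q := by
  obtain ⟨q, hqi, hq⟩ := exists_ne_dist_lt_of_mem_accPts (hc i) (hr i)
  have : Nonempty ι := ⟨i⟩
  have hsup : (⨆ j, |lam j|) = |lam i| :=
    le_antisymm (ciSup_le hi) (le_ciSup ⟨_, forall_mem_range.2 hi⟩ i)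
  refine ⟨c i, q, hqi.symm, ?_⟩
  rw [bumpSum_sub_of_dist_lt hsep lam (hr i) hq, abs_mul, abs_of_nonneg dist_nonneg, hsup,
    dist_comm]

end BumpFamily

/-- If `dens(M') = Γ` for an infinite cardinal `Γ`, then `SNA(M)` contains a linear
subspace isometric to `c₀(Γ)`: indexing by a type `ι` of cardinality `Γ`, there is a
family `(f γ)` vanishing at the base point such that each `c₀(ι)`-combination has
Lipschitz norm `sup |λ γ|` and, if nonzero, strongly attains it. -/
theorem stmt16 {M : Type u} [MetricSpace M] (z₀ : M) (ι : Type u)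
    (hι : Cardinal.mk ι = setDensChar (accPts M))
    (hinf : Cardinal.aleph0 ≤ Cardinal.mk ι) :
    ∃ f : ι → M → ℝ,
      (∀ γ, f γ z₀ = 0) ∧
      ∀ lam : ι → ℝ, (∀ ε > (0 : ℝ), {γ : ι | ε ≤ |lam γ|}.Finite) →
        LipNormEq (fun z => ∑' γ, lam γ * f γ z) (⨆ γ, |lam γ|) ∧
        (lam ≠ 0 → ∃ p q : M, p ≠ q ∧
          |(∑' γ, lam γ * f γ p) - (∑' γ, lam γ * f γ q)| = (⨆ γ, |lam γ|) * dist p q) := by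
  have : Nonempty ι := mk_ne_zero_iff.1 (aleph0_pos.trans_le hinf).ne'
  obtain ⟨c, r, hcr, hsep⟩ := exists_separated_family (hinf.trans hι.le) hι.le
  have hc : ∀ i, c i ∈ accPts M := fun i => (hcr i).1
  have hr : ∀ i, 0 < r i := fun i => (hcr i).2
  refine ⟨fun i z => bump (c i) (r i) z - bump (c i) (r i) z₀, fun i => sub_self _,
    fun lam hlam => ?_⟩
  simp only [tsum_mul_bump_sub hsep, sub_sub_sub_cancel_right]
  refine ⟨lipNormEq_bumpSum_sub hsep hr hc (bddAbove_range_abs hlam) z₀, fun hne => ?_⟩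
  obtain ⟨i, hi⟩ := exists_forall_abs_le hlam hne
  exact exists_abs_bumpSum_sub_eq hsep hr hc hi
end
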